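/- arXiv:0812.3465 — 7 statements merged into one kernel-verified Lean document; each statement's English description precedes it below -/
import Mathlib

section
/- Let Y_1, …, Y_r be i.i.d. standard normal random variables with r ≥ 2, and let θ satisfy 0 < θ ≤ 1/2. Then P( Y_1² + ⋯ + Y_r² < θ² r ) ≤ 4θ². -/
open MeasureTheory ProbabilityTheory Real
open scoped ENNReal NNReal

lemma aux_gauss_integral (s : ℝ) (hs : 0 < s) :
    ∫ x, rexp (-s * x ^ 2) ∂(gaussianReal 0 1) = (Real.sqrt (1 + 2 * s))⁻¹ := by
  have hmeas : Measurable fun x => (gaussianPDFReal 0 1 x).toNNReal :=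
    (measurable_gaussianPDFReal 0 1).real_toNNReal
  rw [gaussianReal_of_var_ne_zero 0 one_ne_zero, gaussianPDF_def]
  rw [show (fun x => ENNReal.ofReal (gaussianPDFReal 0 1 x))
      = fun x => ((gaussianPDFReal 0 1 x).toNNReal : ℝ≥0∞) from rfl,
    integral_withDensity_eq_integral_smul hmeas]
  have hpdf : ∀ x : ℝ, (gaussianPDFReal 0 1 x).toNNReal • rexp (-s * x ^ 2)
      = (Real.sqrt (2 * π))⁻¹ * rexp (-(s + 1/2) * x ^ 2) := by
    intro x
    rw [NNReal.smul_def, Real.coe_toNNReal _ (gaussianPDFReal_nonneg 0 1 x)]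
    simp only [gaussianPDFReal, NNReal.coe_one, mul_one, sub_zero]
    rw [smul_eq_mul, mul_assoc, ← Real.exp_add]
    ring_nf
  simp_rw [hpdf]
  rw [integral_const_mul, integral_gaussian]
  have hs2 : (0:ℝ) < s + 1/2 := by linarith
  have hπ : (0:ℝ) < π := Real.pi_pos
  rw [show (2 * π) = 2 * π by rfl, Real.sqrt_mul (by norm_num : (0:ℝ) ≤ 2) π,
    Real.sqrt_div hπ.le, show (1 + 2 * s) = 2 * (s + 1/2) by ring,
    Real.sqrt_mul (by norm_num : (0:ℝ) ≤ 2)]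
  have h1 : Real.sqrt π ≠ 0 := ne_of_gt (Real.sqrt_pos.mpr hπ)
  have h2 : Real.sqrt 2 ≠ 0 := by positivity
  have h3 : Real.sqrt (s + 1/2) ≠ 0 := ne_of_gt (Real.sqrt_pos.mpr hs2)
  field_simp

/-- **Chi-square lower-tail bound**: if `Y_1, …, Y_r` are i.i.d. standard normal with
`r ≥ 2` and `0 < θ ≤ 1/2`, then `P(Y_1² + ⋯ + Y_r² < θ² r) ≤ 4θ²`. -/
theorem stmt5
    {Ω : Type*} [MeasurableSpace Ω] (P : Measure Ω) [IsProbabilityMeasure P]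
    (r : ℕ) (hr : 2 ≤ r)
    (Y : Fin r → Ω → ℝ) (hYmeas : ∀ i, Measurable (Y i))
    (hYindep : iIndepFun Y P)
    (hYlaw : ∀ i, P.map (Y i) = gaussianReal 0 1)
    (θ : ℝ) (hθ0 : 0 < θ) (hθ : θ ≤ 1 / 2) :
    (P {ω | ∑ i, Y i ω ^ 2 < θ ^ 2 * r}).toReal ≤ 4 * θ ^ 2 := by
  have hs : (0:ℝ) < 1 / (2 * θ ^ 2) := by positivity
  set s : ℝ := 1 / (2 * θ ^ 2) with hs_def
  have ht : -s ≤ 0 := by linarith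
  have hXmeas : ∀ i, Measurable (fun ω => Y i ω ^ 2) := fun i => (hYmeas i).pow_const 2
  have hXindep : iIndepFun
      (fun i ω => Y i ω ^ 2) P :=
    hYindep.comp (fun _ x => x ^ 2) (fun _ => measurable_id.pow_const 2)
  have hsum_apply : ∀ ω, (∑ i, fun ω => Y i ω ^ 2) ω = ∑ i, Y i ω ^ 2 := by
    intro ω; simp
  have hint : Integrable (fun ω => rexp (-s * (∑ i, fun ω => Y i ω ^ 2) ω)) P := by
    apply Integrable.mono' (integrable_const (1:ℝ))
    · apply Measurable.aestronglyMeasurable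
      have hms : Measurable (fun ω => ∑ i, Y i ω ^ 2) :=
        Finset.measurable_sum _ (fun i _ => hXmeas i)
      have he : (fun ω => rexp (-s * (∑ i : Fin r, fun ω => Y i ω ^ 2) ω))
          = fun ω => rexp (-s * ∑ i, Y i ω ^ 2) := by
        funext ω; rw [hsum_apply]
      rw [he]
      exact (hms.const_mul (-s)).exp
    · filter_upwards with ω
      rw [Real.norm_eq_abs, Real.abs_exp]
      rw [Real.exp_le_one_iff]
      apply mul_nonpos_of_nonpos_of_nonneg (by linarith)
      rw [hsum_apply]
      exact Finset.sum_nonneg fun i _ => sq_nonneg _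
  have hmgf_i : ∀ i, mgf (fun ω => Y i ω ^ 2) P (-s) = (Real.sqrt (1 + 2 * s))⁻¹ := by
    intro i
    rw [mgf]
    have hmap : ∫ x, rexp (-s * x ^ 2) ∂(P.map (Y i)) = ∫ ω, rexp (-s * Y i ω ^ 2) ∂P := by
      apply integral_map (hYmeas i).aemeasurable
      apply Measurable.aestronglyMeasurable
      exact (measurable_id.pow_const 2).const_mul (-s) |>.exp
    rw [← hmap, hYlaw i, aux_gauss_integral s hs]
  have hmgf_sum : mgf (∑ i, fun ω => Y i ω ^ 2) P (-s)
      = ((Real.sqrt (1 + 2 * s))⁻¹) ^ r := by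
    rw [hXindep.mgf_sum hXmeas Finset.univ]
    simp [hmgf_i]
  have hcher := measure_le_le_exp_mul_mgf (X := ∑ i, fun ω => Y i ω ^ 2) (μ := P)
    (θ ^ 2 * r) ht hint
  -- numeric estimates
  have hm_le : (Real.sqrt (1 + 2 * s))⁻¹ ≤ θ := by
    rw [inv_le_comm₀ (Real.sqrt_pos.mpr (by linarith)) hθ0]
    rw [← Real.sqrt_sq (le_of_lt (inv_pos.mpr hθ0))]
    apply Real.sqrt_le_sqrt
    have h2s : θ⁻¹ ^ 2 = 2 * s := by
      rw [hs_def]; field_simp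
    linarith
  have hm_nonneg : (0:ℝ) ≤ (Real.sqrt (1 + 2 * s))⁻¹ := by positivity
  have hexp : rexp (-(-s) * (θ ^ 2 * r)) = rexp (1/2) ^ r := by
    rw [← Real.exp_nat_mul]
    congr 1
    rw [hs_def]
    field_simp
  have hexp2 : rexp (1/2) ≤ 2 := by
    have h := Real.add_one_le_exp (-(1/2):ℝ)
    rw [Real.exp_neg] at h
    nlinarith [Real.exp_pos (1/2:ℝ), mul_inv_cancel₀ (Real.exp_ne_zero (1/2:ℝ))]
  have hfinal : rexp (-(-s) * (θ ^ 2 * r)) * mgf (∑ i, fun ω => Y i ω ^ 2) P (-s)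
      ≤ 4 * θ ^ 2 := by
    rw [hexp, hmgf_sum, ← mul_pow]
    have hb : rexp (1/2) * (Real.sqrt (1 + 2 * s))⁻¹ ≤ 2 * θ := by
      apply mul_le_mul hexp2 hm_le hm_nonneg (by norm_num)
    have hbn : (0:ℝ) ≤ rexp (1/2) * (Real.sqrt (1 + 2 * s))⁻¹ := by positivity
    calc (rexp (1/2) * (Real.sqrt (1 + 2 * s))⁻¹) ^ r ≤ (2*θ) ^ r := by
          exact pow_le_pow_left₀ hbn hb r
      _ ≤ (2*θ) ^ 2 := by
          apply pow_le_pow_of_le_one (by positivity) (by linarith) hr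
      _ = 4 * θ ^ 2 := by ring
  refine le_trans (le_trans ?_ hcher) hfinal
  apply ENNReal.toReal_mono (measure_ne_top P _)
  apply measure_mono
  intro ω hω
  simp only [Set.mem_setOf_eq] at *
  rw [hsum_apply]
  exact le_of_lt hω
end

section
/- Under the PEGE setup, there exists a positive constant a₁ depending only on σ₀, ū, λ₀, and J such that for every z ∈ ℝ^r with z ≠ 0 and every T ≥ r, the T-period cumulative regret of the PEGE policy given Z = z satisfies Regret(z, T, PEGE) = ∑_{t=1}^T E[ max_{v ∈ U_r} v′z − V_t′z ] ≤ a₁ · (‖z‖ + 1/‖z‖) · r · √T, where V_t is the arm played by PEGE in period t. -/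
set_option maxHeartbeats 1000000

open MeasureTheory ProbabilityTheory Real
open scoped RealInnerProductSpace ENNReal NNReal

/-- Number of periods preceding cycle `c` (cycles are numbered from 1) of the PEGE policy:
cycle `d` consists of `r` exploration periods followed by `d` exploitation periods, so
cycles `1, …, c−1` occupy `(c−1)r + (c−1)c/2` periods. -/
def pegeStart (r c : ℕ) : ℕ := (c - 1) * r + (c - 1) * c / 2

section AuxLemmas

lemma pege_aux_sq_le (x : ℝ) : x ^ 2 ≤ 2 * (exp x + exp (-x)) - 4 := by
  rcases le_or_gt 0 x with hx | hx
  · have h1 := Real.quadratic_le_exp_of_nonneg hx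
    have h2 := Real.add_one_le_exp (-x)
    nlinarith
  · have hx' : 0 ≤ -x := by linarith
    have h1 := Real.quadratic_le_exp_of_nonneg hx'
    have h2 := Real.add_one_le_exp x
    nlinarith

lemma pege_aux_unit_diff {E : Type*} [NormedAddCommGroup E] [NormedSpace ℝ E]
    (z y : E) (hz : z ≠ 0) (hy : y ≠ 0) :
    ‖‖z‖⁻¹ • z - ‖y‖⁻¹ • y‖ ≤ 2 * ‖z - y‖ / ‖z‖ := by
  have hz0 : (0:ℝ) < ‖z‖ := norm_pos_iff.2 hz
  have hy0 : (0:ℝ) < ‖y‖ := norm_pos_iff.2 hy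
  have key : ‖z‖⁻¹ • z - ‖y‖⁻¹ • y = ‖z‖⁻¹ • (z - y) + (‖z‖⁻¹ - ‖y‖⁻¹) • y := by
    rw [smul_sub, sub_smul]; abel
  rw [key]
  have h1 : ‖‖z‖⁻¹ • (z - y)‖ = ‖z - y‖ / ‖z‖ := by
    rw [norm_smul, norm_inv, norm_norm]; ring
  have h2 : ‖(‖z‖⁻¹ - ‖y‖⁻¹) • y‖ ≤ ‖z - y‖ / ‖z‖ := by
    rw [norm_smul, Real.norm_eq_abs]
    have hd : ‖z‖⁻¹ - ‖y‖⁻¹ = (‖y‖ - ‖z‖) / (‖z‖ * ‖y‖) := by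
      field_simp
    rw [hd, abs_div, abs_of_pos (by positivity : (0:ℝ) < ‖z‖ * ‖y‖)]
    have habs : |‖y‖ - ‖z‖| ≤ ‖z - y‖ := by
      rw [norm_sub_rev]; exact abs_norm_sub_norm_le y z
    rw [div_mul_eq_mul_div, mul_comm ‖z‖ ‖y‖, ← div_div, mul_div_assoc,
      div_self (ne_of_gt hy0), mul_one]
    gcongr
  calc ‖‖z‖⁻¹ • (z - y) + (‖z‖⁻¹ - ‖y‖⁻¹) • y‖
      ≤ ‖‖z‖⁻¹ • (z - y)‖ + ‖(‖z‖⁻¹ - ‖y‖⁻¹) • y‖ := norm_add_le _ _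
    _ ≤ ‖z - y‖ / ‖z‖ + ‖z - y‖ / ‖z‖ := by rw [h1]; linarith [h2]
    _ = 2 * ‖z - y‖ / ‖z‖ := by ring

lemma pege_aux_second_moment {Ω : Type} [MeasurableSpace Ω] (P : Measure Ω)
    [IsProbabilityMeasure P] (σ₀ : ℝ) (hσ₀ : 0 < σ₀) (W : Ω → ℝ) (hm : Measurable W)
    (hint : ∀ x : ℝ, Integrable (fun ω => Real.exp (x * W ω)) P)
    (hmgf : ∀ x : ℝ, ∫ ω, Real.exp (x * W ω) ∂P ≤ Real.exp (x ^ 2 * σ₀ ^ 2 / 2)) :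
    Integrable (fun ω => (W ω) ^ 2) P ∧ ∫ ω, (W ω) ^ 2 ∂P ≤ 4 * σ₀ ^ 2 := by
  set g : Ω → ℝ := fun ω =>
    σ₀ ^ 2 * (2 * (Real.exp (σ₀⁻¹ * W ω) + Real.exp (-σ₀⁻¹ * W ω)) - 4) with hg
  have hgint : Integrable g P := by
    apply Integrable.const_mul
    apply Integrable.sub
    · exact ((hint σ₀⁻¹).add (hint (-σ₀⁻¹))).const_mul 2
    · exact integrable_const 4
  have hptwise : ∀ ω, (W ω) ^ 2 ≤ g ω := by
    intro ω
    have := pege_aux_sq_le (σ₀⁻¹ * W ω)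
    have hσ2 : (0:ℝ) < σ₀ ^ 2 := by positivity
    have h2 : (σ₀⁻¹ * W ω) ^ 2 = (W ω) ^ 2 / σ₀ ^ 2 := by
      field_simp
    rw [h2] at this
    have hmul := mul_le_mul_of_nonneg_left this (le_of_lt hσ2)
    have hEq : σ₀ ^ 2 * ((W ω) ^ 2 / σ₀ ^ 2) = (W ω) ^ 2 := by field_simp
    rw [hEq] at hmul
    simpa [hg, neg_mul] using hmul
  have hWint : Integrable (fun ω => (W ω) ^ 2) P := by
    refine Integrable.mono' hgint ((hm.pow_const 2).aestronglyMeasurable) ?_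
    filter_upwards with ω
    rw [Real.norm_eq_abs, abs_of_nonneg (sq_nonneg _)]
    exact hptwise ω
  refine ⟨hWint, ?_⟩
  have hgb : ∫ ω, g ω ∂P ≤ 4 * σ₀ ^ 2 := by
    have e1 : ∫ ω, g ω ∂P
        = σ₀ ^ 2 * (2 * ((∫ ω, Real.exp (σ₀⁻¹ * W ω) ∂P)
            + ∫ ω, Real.exp (-σ₀⁻¹ * W ω) ∂P) - 4) := by
      have iA : Integrable (fun ω => 2 * (Real.exp (σ₀⁻¹ * W ω) + Real.exp (-σ₀⁻¹ * W ω))) P := by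
        have := ((hint σ₀⁻¹).add (hint (-σ₀⁻¹))).const_mul 2
        simpa [Pi.add_apply] using this
      rw [hg]
      rw [integral_const_mul]
      congr 1
      rw [integral_sub iA (integrable_const 4),
        integral_const_mul, integral_add (hint σ₀⁻¹) (hint (-σ₀⁻¹))]
      simp [measure_univ]
    have hb1 := hmgf σ₀⁻¹
    have hb2 := hmgf (-σ₀⁻¹)
    have hv : (σ₀⁻¹) ^ 2 * σ₀ ^ 2 / 2 = 1/2 := by
      field_simp
    have hv' : (-σ₀⁻¹) ^ 2 * σ₀ ^ 2 / 2 = 1/2 := by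
      rw [neg_pow]; simp; field_simp
    rw [hv] at hb1; rw [hv'] at hb2
    have hexp : Real.exp (1/2) ≤ 2 := by
      nlinarith [Real.exp_one_lt_d9, Real.exp_pos (1/2:ℝ),
        Real.exp_add (1/2:ℝ) (1/2:ℝ), sq_nonneg (Real.exp (1/2:ℝ) - 2)]
    rw [e1]
    nlinarith [sq_nonneg σ₀]
  calc ∫ ω, (W ω) ^ 2 ∂P ≤ ∫ ω, g ω ∂P := integral_mono hWint hgint hptwise
    _ ≤ 4 * σ₀ ^ 2 := hgb

lemma pege_aux_normsq_sum {Ω : Type} [MeasurableSpace Ω] (P : Measure Ω)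
    [IsProbabilityMeasure P] {ι : Type*} [DecidableEq ι] (A : Finset ι) {n : ℕ}
    (b : ι → EuclideanSpace ℝ (Fin n)) (X : ι → Ω → ℝ) (σ2 ubar : ℝ)
    (hσ2 : 0 ≤ σ2)
    (hint2 : ∀ p ∈ A, Integrable (fun ω => X p ω ^ 2) P)
    (hb2 : ∀ p ∈ A, ∫ ω, X p ω ^ 2 ∂P ≤ σ2)
    (hbn : ∀ p ∈ A, ‖b p‖ ≤ ubar)
    (hcross_int : ∀ p ∈ A, ∀ q ∈ A, p ≠ q → Integrable (fun ω => X p ω * X q ω) P)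
    (hcross : ∀ p ∈ A, ∀ q ∈ A, p ≠ q → ∫ ω, X p ω * X q ω ∂P = 0) :
    Integrable (fun ω => ‖∑ p ∈ A, X p ω • b p‖ ^ 2) P ∧
    ∫ ω, ‖∑ p ∈ A, X p ω • b p‖ ^ 2 ∂P ≤ A.card * (σ2 * ubar ^ 2) := by
  have hprod_int : ∀ p ∈ A, ∀ q ∈ A,
      Integrable (fun ω => X p ω * X q ω * ⟪b p, b q⟫) P := by
    intro p hp q hq
    rcases eq_or_ne p q with rfl | hpq
    · have := (hint2 p hp).mul_const ⟪b p, b p⟫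
      refine this.congr ?_
      filter_upwards with ω
      ring
    · exact (hcross_int p hp q hq hpq).mul_const _
  have expand : (fun ω => ‖∑ p ∈ A, X p ω • b p‖ ^ 2)
      = fun ω => ∑ p ∈ A, ∑ q ∈ A, X p ω * X q ω * ⟪b p, b q⟫ := by
    funext ω
    rw [← real_inner_self_eq_norm_sq, sum_inner]
    refine Finset.sum_congr rfl fun p hp => ?_
    rw [real_inner_smul_left, inner_sum, Finset.mul_sum]
    refine Finset.sum_congr rfl fun q hq => ?_
    rw [real_inner_smul_right]
    ring
  have hIsum : Integrable (fun ω => ∑ p ∈ A, ∑ q ∈ A, X p ω * X q ω * ⟪b p, b q⟫) P := by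
    apply integrable_finset_sum
    intro p hp
    exact integrable_finset_sum _ (fun q hq => hprod_int p hp q hq)
  constructor
  · rw [expand]; exact hIsum
  rw [expand]
  rw [integral_finset_sum _ (fun p hp => integrable_finset_sum _ (fun q hq => hprod_int p hp q hq))]
  have hterm : ∀ p ∈ A, ∫ ω, ∑ q ∈ A, X p ω * X q ω * ⟪b p, b q⟫ ∂P ≤ σ2 * ubar ^ 2 := by
    intro p hp
    rw [integral_finset_sum _ (fun q hq => hprod_int p hp q hq)]
    have hq0 : ∀ q ∈ A, q ≠ p → ∫ ω, X p ω * X q ω * ⟪b p, b q⟫ ∂P = 0 := by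
      intro q hq hqp
      rw [integral_mul_const, hcross p hp q hq (Ne.symm hqp), zero_mul]
    rw [Finset.sum_eq_single_of_mem p hp hq0]
    have e1 : ∫ ω, X p ω * X p ω * ⟪b p, b p⟫ ∂P = (∫ ω, X p ω ^ 2 ∂P) * ⟪b p, b p⟫ := by
      rw [integral_mul_const]
      congr 1
      apply integral_congr_ae
      filter_upwards with ω
      ring
    rw [e1, real_inner_self_eq_norm_sq]
    have h1 : (0:ℝ) ≤ ∫ ω, X p ω ^ 2 ∂P := integral_nonneg fun ω => sq_nonneg _
    have h2 : ‖b p‖ ^ 2 ≤ ubar ^ 2 := by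
      have := hbn p hp
      nlinarith [norm_nonneg (b p)]
    have h3 : (0:ℝ) ≤ ‖b p‖ ^ 2 := sq_nonneg _
    nlinarith [hb2 p hp]
  calc ∑ p ∈ A, ∫ ω, ∑ q ∈ A, X p ω * X q ω * ⟪b p, b q⟫ ∂P
      ≤ ∑ p ∈ A, (σ2 * ubar ^ 2) := Finset.sum_le_sum hterm
    _ = A.card * (σ2 * ubar ^ 2) := by rw [Finset.sum_const, nsmul_eq_mul]

lemma pege_aux_ustar_homog {n : ℕ} (K : Set (EuclideanSpace ℝ (Fin n)))
    (ustar : EuclideanSpace ℝ (Fin n) → EuclideanSpace ℝ (Fin n))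
    (hustarK : ∀ z : EuclideanSpace ℝ (Fin n), z ≠ 0 → ustar z ∈ K)
    (hmax : ∀ z : EuclideanSpace ℝ (Fin n), z ≠ 0 → ∀ v ∈ K, ⟪v, z⟫ ≤ ⟪ustar z, z⟫)
    (huniq : ∀ z : EuclideanSpace ℝ (Fin n), z ≠ 0 → ∀ v ∈ K,
      (∀ u ∈ K, ⟪u, z⟫ ≤ ⟪v, z⟫) → v = ustar z)
    (z : EuclideanSpace ℝ (Fin n)) (hz : z ≠ 0) : ustar (‖z‖⁻¹ • z) = ustar z := by
  have hz0 : (0:ℝ) < ‖z‖ := norm_pos_iff.2 hz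
  have hzu : (‖z‖⁻¹ • z : EuclideanSpace ℝ (Fin n)) ≠ 0 := by
    simp [smul_ne_zero_iff, hz, ne_of_gt (inv_pos.2 hz0)]
  refine huniq z hz _ (hustarK _ hzu) ?_
  intro u hu
  have h := hmax _ hzu u hu
  rw [real_inner_smul_right, real_inner_smul_right] at h
  exact le_of_mul_le_mul_left (by simpa [mul_comm] using h) (inv_pos.2 hz0)

lemma pege_aux_greedy {n : ℕ} (K : Set (EuclideanSpace ℝ (Fin n))) (ubar J : ℝ)
    (hubar : 0 < ubar) (hJ : 0 < J) (hK : ∀ u ∈ K, ‖u‖ ≤ ubar)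
    (ustar : EuclideanSpace ℝ (Fin n) → EuclideanSpace ℝ (Fin n))
    (hustarK : ∀ z : EuclideanSpace ℝ (Fin n), z ≠ 0 → ustar z ∈ K)
    (hmax : ∀ z : EuclideanSpace ℝ (Fin n), z ≠ 0 → ∀ v ∈ K, ⟪v, z⟫ ≤ ⟪ustar z, z⟫)
    (huniq : ∀ z : EuclideanSpace ℝ (Fin n), z ≠ 0 → ∀ v ∈ K,
      (∀ u ∈ K, ⟪u, z⟫ ≤ ⟪v, z⟫) → v = ustar z)
    (hLip : ∀ z y : EuclideanSpace ℝ (Fin n), ‖z‖ = 1 → ‖y‖ = 1 →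
      ‖ustar z - ustar y‖ ≤ J * ‖z - y‖)
    (z : EuclideanSpace ℝ (Fin n)) (hz : z ≠ 0) (y : EuclideanSpace ℝ (Fin n))
    (g : EuclideanSpace ℝ (Fin n)) (hgK : g ∈ K)
    (hgmax : ∀ v ∈ K, ⟪v, y⟫ ≤ ⟪g, y⟫) :
    ⟪ustar z, z⟫ - ⟪g, z⟫ ≤ ((4 * J + 2 * ubar) / ‖z‖) * ‖y - z‖ ^ 2 := by
  have hz0 : (0:ℝ) < ‖z‖ := norm_pos_iff.2 hz
  rcases eq_or_ne y 0 with rfl | hy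
  · have h1 : ⟪ustar z, z⟫ ≤ ‖ustar z‖ * ‖z‖ := real_inner_le_norm _ _
    have h2 : -⟪g, z⟫ ≤ ‖g‖ * ‖z‖ := by
      have h3 : |⟪g, z⟫| ≤ ‖g‖ * ‖z‖ := abs_real_inner_le_norm g z
      linarith [neg_abs_le ⟪g, z⟫]
    have hb1 := hK _ (hustarK z hz)
    have hb2 := hK _ hgK
    have hrw : ‖(0:EuclideanSpace ℝ (Fin n)) - z‖ ^ 2 = ‖z‖ ^ 2 := by rw [zero_sub, norm_neg]
    rw [hrw]
    have hfin : ((4 * J + 2 * ubar) / ‖z‖) * ‖z‖ ^ 2 = (4 * J + 2 * ubar) * ‖z‖ := by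
      field_simp
    rw [hfin]
    nlinarith
  · have hy0 : (0:ℝ) < ‖y‖ := norm_pos_iff.2 hy
    have hgy : g = ustar y := huniq y hy g hgK hgmax
    subst hgy
    set zu : EuclideanSpace ℝ (Fin n) := ‖z‖⁻¹ • z with hzu_def
    set yu : EuclideanSpace ℝ (Fin n) := ‖y‖⁻¹ • y with hyu_def
    have hzu_norm : ‖zu‖ = 1 := by
      rw [hzu_def, norm_smul, norm_inv, norm_norm, inv_mul_cancel₀ (ne_of_gt hz0)]
    have hyu_norm : ‖yu‖ = 1 := by
      rw [hyu_def, norm_smul, norm_inv, norm_norm, inv_mul_cancel₀ (ne_of_gt hy0)]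
    have hz_eq : ustar zu = ustar z := pege_aux_ustar_homog K ustar hustarK hmax huniq z hz
    have hy_eq : ustar yu = ustar y := pege_aux_ustar_homog K ustar hustarK hmax huniq y hy
    have hdist : ‖zu - yu‖ ≤ 2 * ‖z - y‖ / ‖z‖ := pege_aux_unit_diff z y hz hy
    have hLipb : ‖ustar z - ustar y‖ ≤ J * ‖zu - yu‖ := by
      rw [← hz_eq, ← hy_eq]; exact hLip zu yu hzu_norm hyu_norm
    have hneg : ⟪ustar z - ustar y, y⟫ ≤ 0 := by
      rw [inner_sub_left]
      have := hmax y hy (ustar z) (hustarK z hz)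
      linarith
    have hkey : ⟪ustar z, z⟫ - ⟪ustar y, z⟫
        ≤ ‖ustar z - ustar y‖ * ‖z - (‖z‖ / ‖y‖) • y‖ := by
      have e1 : ⟪ustar z, z⟫ - ⟪ustar y, z⟫ = ⟪ustar z - ustar y, z⟫ := by
        rw [inner_sub_left]
      have e2 : ⟪ustar z - ustar y, z⟫
          = ⟪ustar z - ustar y, z - (‖z‖ / ‖y‖) • y⟫
            + (‖z‖ / ‖y‖) * ⟪ustar z - ustar y, y⟫ := by
        rw [inner_sub_right, real_inner_smul_right]; ring
      have e3 : (‖z‖ / ‖y‖) * ⟪ustar z - ustar y, y⟫ ≤ 0 :=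
        mul_nonpos_of_nonneg_of_nonpos (by positivity) hneg
      have e4 : ⟪ustar z - ustar y, z - (‖z‖ / ‖y‖) • y⟫
          ≤ ‖ustar z - ustar y‖ * ‖z - (‖z‖ / ‖y‖) • y‖ := real_inner_le_norm _ _
      rw [e1, e2]; linarith
    have hscale : z - (‖z‖ / ‖y‖) • y = ‖z‖ • (zu - yu) := by
      rw [hzu_def, hyu_def, smul_sub, smul_smul, smul_smul]
      rw [mul_inv_cancel₀ (ne_of_gt hz0), one_smul, div_eq_mul_inv]
    have hnorm2 : ‖z - (‖z‖ / ‖y‖) • y‖ = ‖z‖ * ‖zu - yu‖ := by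
      rw [hscale, norm_smul, Real.norm_eq_abs, abs_of_pos hz0]
    have final : ⟪ustar z, z⟫ - ⟪ustar y, z⟫
        ≤ (J * (2 * ‖z - y‖ / ‖z‖)) * (‖z‖ * (2 * ‖z - y‖ / ‖z‖)) := by
      have h1 : ‖ustar z - ustar y‖ ≤ J * (2 * ‖z - y‖ / ‖z‖) :=
        hLipb.trans (by gcongr)
      have h2 : ‖z - (‖z‖ / ‖y‖) • y‖ ≤ ‖z‖ * (2 * ‖z - y‖ / ‖z‖) := by
        rw [hnorm2]; gcongr
      calc ⟪ustar z, z⟫ - ⟪ustar y, z⟫ ≤ ‖ustar z - ustar y‖ * ‖z - (‖z‖ / ‖y‖) • y‖ := hkey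
        _ ≤ _ := by
            apply mul_le_mul h1 h2 (norm_nonneg _)
            positivity
    have hcalc : (J * (2 * ‖z - y‖ / ‖z‖)) * (‖z‖ * (2 * ‖z - y‖ / ‖z‖))
        = (4 * J / ‖z‖) * ‖z - y‖ ^ 2 := by
      field_simp; ring
    rw [hcalc] at final
    have hle : (4 * J / ‖z‖) * ‖z - y‖ ^ 2 ≤ ((4 * J + 2 * ubar) / ‖z‖) * ‖y - z‖ ^ 2 := by
      rw [norm_sub_rev z y]
      gcongr
      linarith
    linarith

lemma pegeStep (r c : ℕ) (hc : 1 ≤ c) :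
    pegeStart r (c + 1) = pegeStart r c + r + c := by
  obtain ⟨m, rfl⟩ : ∃ m, c = m + 1 := ⟨c - 1, by omega⟩
  unfold pegeStart
  simp only [Nat.add_sub_cancel]
  have h1 : (m + 1) * (m + 1 + 1) = m * (m + 1) + 2 * (m + 1) := by ring
  obtain ⟨k, hk⟩ := Nat.even_mul_succ_self m
  have h3 : (m + 1) * r = m * r + r := by ring
  omega

lemma pegeStart_one (r : ℕ) : pegeStart r 1 = 0 := by simp [pegeStart]

lemma pegeStart_ge (r c : ℕ) (hr : 1 ≤ r) : c ≤ pegeStart r (c + 1) := by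
  have h1 : c ≤ c * r := Nat.le_mul_of_pos_right c hr
  have : pegeStart r (c + 1) = c * r + c * (c + 1) / 2 := by
    unfold pegeStart; simp only [Nat.add_sub_cancel]
  omega

lemma pege_decomp (r : ℕ) (hr : 1 ≤ r) (t : ℕ) (ht : 1 ≤ t) :
    ∃ c, 1 ≤ c ∧ pegeStart r c < t ∧ t ≤ pegeStart r c + r + c := by
  have hex : ∃ c, t ≤ pegeStart r (c + 1) := ⟨t, pegeStart_ge r t hr⟩
  classical
  let c := Nat.find hex
  have hspec : t ≤ pegeStart r (c + 1) := Nat.find_spec hex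
  have hc1 : 1 ≤ c := by
    by_contra h
    have hc0 : c = 0 := by omega
    have := hspec
    rw [hc0, show (0+1 : ℕ) = 1 from rfl, pegeStart_one] at this
    omega
  have hmin : ¬ t ≤ pegeStart r ((c - 1) + 1) := Nat.find_min hex (by omega)
  refine ⟨c, hc1, ?_, ?_⟩
  · have he : (c - 1) + 1 = c := by omega
    rw [he] at hmin; omega
  · rw [← pegeStep r c hc1]; exact hspec

lemma pege_sum_Ioc_block (f : ℕ → ℝ) (a m : ℕ) :
    ∑ t ∈ Finset.Ioc a (a + m), f t = ∑ j ∈ Finset.range m, f (a + 1 + j) := by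
  have h : Finset.Ioc a (a + m) = Finset.Ico (a + 1) (a + m + 1) := by
    ext x; simp [Nat.lt_succ_iff]
  have h2 : a + m + 1 - (a + 1) = m := by omega
  rw [h, Finset.sum_Ico_eq_sum_range, h2]

lemma pege_sum_Icc_cycles (f : ℕ → ℝ) (r : ℕ) (C : ℕ) :
    ∑ t ∈ Finset.Icc 1 (pegeStart r (C + 1)), f t
      = ∑ c ∈ Finset.Icc 1 C, ∑ t ∈ Finset.Ioc (pegeStart r c) (pegeStart r (c + 1)), f t := by
  induction C with
  | zero => simp [pegeStart_one]
  | succ n ih =>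
    have hmono : pegeStart r (n + 1) ≤ pegeStart r (n + 2) := by
      rw [pegeStep r (n + 1) (by omega)]; omega
    have hsplit : ∑ t ∈ Finset.Ioc 0 (pegeStart r (n+1)), f t
        + ∑ t ∈ Finset.Ioc (pegeStart r (n+1)) (pegeStart r (n+2)), f t
        = ∑ t ∈ Finset.Ioc 0 (pegeStart r (n+2)), f t :=
      Finset.sum_Ioc_consecutive f (Nat.zero_le _) hmono
    have hIcc : ∀ m : ℕ, Finset.Icc 1 m = Finset.Ioc 0 m := by
      intro m; ext x; simp; omega
    rw [hIcc, ← hsplit, ← hIcc, ih, Finset.sum_Icc_succ_top (by omega : 1 ≤ n + 1)]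

end AuxLemmas

/-- **Regret of the PEGE policy** (first half of Theorem 2 of
Rusmevichientong–Tsitsiklis): under the SBAR(J) condition, there is a constant `a₁ > 0`
depending only on `σ₀, ū, λ₀, J` such that for every nonzero `z` and every `T ≥ r`,
`Regret(z, T, PEGE) ≤ a₁ (‖z‖ + 1/‖z‖) r √T`. -/
theorem stmt6 (σ₀ ubar lam0 J : ℝ) (hσ₀ : 0 < σ₀) (hubar : 0 < ubar) (hlam0 : 0 < lam0)
    (hJ : 0 < J) :
    ∃ a₁ : ℝ, 0 < a₁ ∧
      ∀ (r : ℕ), 2 ≤ r →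
      ∀ (K : Set (EuclideanSpace ℝ (Fin r))), IsCompact K →
        (∀ u ∈ K, ‖u‖ ≤ ubar) →
      ∀ (b : Fin r → EuclideanSpace ℝ (Fin r)), LinearIndependent ℝ b →
        (∀ k, b k ∈ K) →
        (∀ v : EuclideanSpace ℝ (Fin r), lam0 * ‖v‖ ^ 2 ≤ ∑ k, ⟪b k, v⟫ ^ 2) →
      -- SBAR(J): unique best arm response, Lipschitz on unit vectors
      ∀ (ustar : EuclideanSpace ℝ (Fin r) → EuclideanSpace ℝ (Fin r)),
        (∀ z, z ≠ 0 → ustar z ∈ K) →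
        (∀ z, z ≠ 0 → ∀ v ∈ K, ⟪v, z⟫ ≤ ⟪ustar z, z⟫) →
        (∀ z, z ≠ 0 → ∀ v ∈ K, (∀ u ∈ K, ⟪u, z⟫ ≤ ⟪v, z⟫) → v = ustar z) →
        (∀ z y : EuclideanSpace ℝ (Fin r), ‖z‖ = 1 → ‖y‖ = 1 →
          ‖ustar z - ustar y‖ ≤ J * ‖z - y‖) →
      ∀ (Ω : Type) (mΩ : MeasurableSpace Ω) (P : Measure Ω), IsProbabilityMeasure P →
      -- the noise variables `W k s` for arm `b k` in cycle `s`
      ∀ (W : Fin r → ℕ → Ω → ℝ), (∀ k s, Measurable (W k s)) →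
        iIndepFun (m := fun _ : Fin r × ℕ => (inferInstance : MeasurableSpace ℝ))
          (fun p : Fin r × ℕ => W p.1 p.2) P →
        (∀ k s, Integrable (W k s) P) →
        (∀ k s, ∫ ω, W k s ω ∂P = 0) →
        (∀ k s (x : ℝ), Integrable (fun ω => Real.exp (x * W k s ω)) P) →
        (∀ k s (x : ℝ), ∫ ω, Real.exp (x * W k s ω) ∂P ≤ Real.exp (x ^ 2 * σ₀ ^ 2 / 2)) →
      ∀ (z : EuclideanSpace ℝ (Fin r)), z ≠ 0 →
      -- the OLS estimate `Ẑ(c)` from the exploration phases of cycles `1, …, c`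
      ∀ (Zhat : ℕ → Ω → EuclideanSpace ℝ (Fin r)),
        (∀ c ω, ∑ k, ⟪b k, Zhat c ω - z⟫ • b k
            = (c : ℝ)⁻¹ • ∑ s ∈ Finset.Icc 1 c, ∑ k, W k s ω • b k) →
      -- the greedy arm `G(c)`
      ∀ (G : ℕ → Ω → EuclideanSpace ℝ (Fin r)), (∀ c, Measurable (G c)) →
        (∀ c ω, G c ω ∈ K) →
        (∀ c ω, ∀ v ∈ K, ⟪v, Zhat c ω⟫ ≤ ⟪G c ω, Zhat c ω⟫) →
      -- the arm `V t` played by PEGE in period `t` (periods numbered from 1)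
      ∀ (V : ℕ → Ω → EuclideanSpace ℝ (Fin r)),
        (∀ c, 1 ≤ c → ∀ k : Fin r, ∀ ω, V (pegeStart r c + (k : ℕ) + 1) ω = b k) →
        (∀ c, 1 ≤ c → ∀ i, 1 ≤ i → i ≤ c → ∀ ω, V (pegeStart r c + r + i) ω = G c ω) →
      ∀ T : ℕ, r ≤ T →
        ∑ t ∈ Finset.Icc 1 T, ∫ ω, (sSup ((fun u => ⟪u, z⟫) '' K) - ⟪V t ω, z⟫) ∂P
          ≤ a₁ * (‖z‖ + 1 / ‖z‖) * r * Real.sqrt T := by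
  classical
  set M : ℝ := 4 * J + 2 * ubar with hM
  set D : ℝ := 4 * M * σ₀ ^ 2 * ubar ^ 2 / lam0 ^ 2 with hD
  set K₃ : ℝ := 2 * ubar + D with hK₃
  have hMpos : 0 < M := by rw [hM]; positivity
  have hDpos : 0 < D := by rw [hD]; positivity
  have hK₃pos : 0 < K₃ := by rw [hK₃]; positivity
  refine ⟨3 * K₃, by positivity, ?_⟩
  intro r hr2 K hKcpt hKb b hbli hbK heig ustar hustarK hmax huniq hLip
    Ω mΩ P hPprob W hWm hWindep hWint hWmean hWmgfint hWmgf z hz Zhat hZhat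
    G hGm hGK hGmax V hVb hVG T hT
  have hr1 : 1 ≤ r := by omega
  have hz0 : (0:ℝ) < ‖z‖ := norm_pos_iff.2 hz
  have hzinv : (0:ℝ) < 1 / ‖z‖ := by positivity
  set f : ℕ → ℝ := fun t => ∫ ω, (sSup ((fun u => ⟪u, z⟫) '' K) - ⟪V t ω, z⟫) ∂P with hf
  -- the supremum equals the value at ustar z
  have hsSup : sSup ((fun u => ⟪u, z⟫) '' K) = ⟪ustar z, z⟫ := by
    have hKne : ((fun u => ⟪u, z⟫) '' K).Nonempty :=
      ⟨_, ⟨b ⟨0, by omega⟩, hbK _, rfl⟩⟩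
    apply le_antisymm
    · apply csSup_le hKne
      rintro w ⟨u, hu, rfl⟩
      exact hmax z hz u hu
    · apply le_csSup
      · refine ⟨ubar * ‖z‖, ?_⟩
        rintro w ⟨u, hu, rfl⟩
        calc ⟪u, z⟫ ≤ ‖u‖ * ‖z‖ := real_inner_le_norm u z
          _ ≤ ubar * ‖z‖ := by have := hKb u hu; nlinarith [norm_nonneg u]
      · exact ⟨ustar z, hustarK z hz, rfl⟩
  have hsSup_ge : ∀ v ∈ K, ⟪v, z⟫ ≤ sSup ((fun u => ⟪u, z⟫) '' K) := by
    intro v hv; rw [hsSup]; exact hmax z hz v hv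
  -- membership of played arms
  have hVmem : ∀ t, 1 ≤ t → ∀ ω, V t ω ∈ K := by
    intro t ht ω
    obtain ⟨c, hc1, hlow, hhigh⟩ := pege_decomp r hr1 t ht
    set j := t - pegeStart r c with hj
    have hj1 : 1 ≤ j := by omega
    have hjrc : j ≤ r + c := by omega
    rcases le_or_gt j r with hjr | hjr
    · have hk : j - 1 < r := by omega
      have ht_eq : t = pegeStart r c + ((⟨j - 1, hk⟩ : Fin r) : ℕ) + 1 := by
        simp only []; omega
      rw [ht_eq, hVb c hc1 ⟨j - 1, hk⟩ ω]
      exact hbK _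
    · have hi1 : 1 ≤ j - r := by omega
      have hi2 : j - r ≤ c := by omega
      have ht_eq : t = pegeStart r c + r + (j - r) := by omega
      rw [ht_eq, hVG c hc1 (j - r) hi1 hi2 ω]
      exact hGK c ω
  have hf_nonneg : ∀ t, 1 ≤ t → 0 ≤ f t := by
    intro t ht
    apply integral_nonneg
    intro ω
    have := hsSup_ge (V t ω) (hVmem t ht ω)
    simp only [Pi.zero_apply]
    linarith
  -- second moments of noise
  have hW2 : ∀ (k : Fin r) (s : ℕ), Integrable (fun ω => (W k s ω) ^ 2) P ∧
      ∫ ω, (W k s ω) ^ 2 ∂P ≤ 4 * σ₀ ^ 2 :=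
    fun k s => pege_aux_second_moment P σ₀ hσ₀ (W k s) (hWm k s)
      (fun x => hWmgfint k s x) (fun x => hWmgf k s x)
  -- cross moments vanish
  have hcross : ∀ (k k' : Fin r) (s s' : ℕ), ((k, s) : Fin r × ℕ) ≠ (k', s') →
      Integrable (fun ω => W k s ω * W k' s' ω) P ∧
        ∫ ω, W k s ω * W k' s' ω ∂P = 0 := by
    intro k k' s s' hne
    have hind : IndepFun (W k s) (W k' s') P := hWindep.indepFun hne
    constructor
    · have := hind.integrable_mul (hWint k s) (hWint k' s')
      exact this
    · have := hind.integral_fun_mul_eq_mul_integral (hWm k s).aestronglyMeasurable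
        (hWm k' s').aestronglyMeasurable
      rw [this, hWmean k s, zero_mul]
  -- the noise sum S c and its second moment
  set S : ℕ → Ω → EuclideanSpace ℝ (Fin r) :=
    fun c ω => ∑ s ∈ Finset.Icc 1 c, ∑ k, W k s ω • b k with hS
  have hSbound : ∀ c : ℕ, Integrable (fun ω => ‖S c ω‖ ^ 2) P ∧
      ∫ ω, ‖S c ω‖ ^ 2 ∂P ≤ (c * r : ℕ) * (4 * σ₀ ^ 2 * ubar ^ 2) := by
    intro c
    set A : Finset (ℕ × Fin r) := Finset.Icc 1 c ×ˢ Finset.univ with hA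
    have hSeq : ∀ ω, S c ω = ∑ p ∈ A, W p.2 p.1 ω • b p.2 := by
      intro ω
      rw [hS, hA, Finset.sum_product]
    have hcard : A.card = c * r := by
      rw [hA, Finset.card_product, Nat.card_Icc, Finset.card_univ, Fintype.card_fin,
        Nat.add_sub_cancel]
    have := pege_aux_normsq_sum P A (fun p => b p.2) (fun p ω => W p.2 p.1 ω)
      (4 * σ₀ ^ 2) ubar (by positivity)
      (fun p _ => (hW2 p.2 p.1).1)
      (fun p _ => (hW2 p.2 p.1).2)
      (fun p _ => hKb _ (hbK p.2))
      (fun p _ q _ hpq => (hcross p.2 q.2 p.1 q.1 (by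
        simp only [ne_eq, Prod.mk.injEq, not_and]
        intro h1 h2
        apply hpq
        exact Prod.ext h2 h1)).1)
      (fun p _ q _ hpq => (hcross p.2 q.2 p.1 q.1 (by
        simp only [ne_eq, Prod.mk.injEq, not_and]
        intro h1 h2
        apply hpq
        exact Prod.ext h2 h1)).2)
    obtain ⟨hI, hB⟩ := this
    have hfun : (fun ω => ‖S c ω‖ ^ 2) = fun ω => ‖∑ p ∈ A, W p.2 p.1 ω • b p.2‖ ^ 2 := by
      funext ω; rw [hSeq ω]
    constructor
    · rw [hfun]; exact hI
    · rw [hfun]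
      calc ∫ ω, ‖∑ p ∈ A, W p.2 p.1 ω • b p.2‖ ^ 2 ∂P
          ≤ A.card * (4 * σ₀ ^ 2 * ubar ^ 2) := hB
        _ = (c * r : ℕ) * (4 * σ₀ ^ 2 * ubar ^ 2) := by rw [hcard]
  -- pointwise estimation error bound
  have hZd : ∀ c : ℕ, 1 ≤ c → ∀ ω, ‖Zhat c ω - z‖ ≤ ‖S c ω‖ / (lam0 * c) := by
    intro c hc ω
    have hc0 : (0:ℝ) < (c:ℝ) := by exact_mod_cast hc
    set d : EuclideanSpace ℝ (Fin r) := Zhat c ω - z with hd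
    have h1 : lam0 * ‖d‖ ^ 2 ≤ ∑ k, ⟪b k, d⟫ ^ 2 := heig d
    have h2 : ∑ k, ⟪b k, d⟫ ^ 2 = ⟪∑ k, ⟪b k, d⟫ • b k, d⟫ := by
      rw [sum_inner]
      refine (Finset.sum_congr rfl fun k _ => ?_).symm
      rw [real_inner_smul_left]
      ring
    have h3 : (∑ k, ⟪b k, d⟫ • b k) = (c : ℝ)⁻¹ • S c ω := hZhat c ω
    have h4 : lam0 * ‖d‖ ^ 2 ≤ (c:ℝ)⁻¹ * (‖S c ω‖ * ‖d‖) := by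
      have h5 : ⟪(c : ℝ)⁻¹ • S c ω, d⟫ = (c:ℝ)⁻¹ * ⟪S c ω, d⟫ := real_inner_smul_left _ _ _
      have h6 : ⟪S c ω, d⟫ ≤ ‖S c ω‖ * ‖d‖ := real_inner_le_norm _ _
      have h7 : (0:ℝ) ≤ (c:ℝ)⁻¹ := by positivity
      calc lam0 * ‖d‖ ^ 2 ≤ ∑ k, ⟪b k, d⟫ ^ 2 := h1
        _ = ⟪∑ k, ⟪b k, d⟫ • b k, d⟫ := h2
        _ = (c:ℝ)⁻¹ * ⟪S c ω, d⟫ := by rw [h3, h5]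
        _ ≤ (c:ℝ)⁻¹ * (‖S c ω‖ * ‖d‖) := by
            apply mul_le_mul_of_nonneg_left h6 h7
    rcases eq_or_lt_of_le (norm_nonneg d) with hd0 | hd0
    · rw [← hd0]; positivity
    · rw [le_div_iff₀ (by positivity : (0:ℝ) < lam0 * c)]
      have h8 : lam0 * ‖d‖ ^ 2 * c ≤ ‖S c ω‖ * ‖d‖ := by
        have := mul_le_mul_of_nonneg_right h4 hc0.le
        calc lam0 * ‖d‖ ^ 2 * c ≤ (c:ℝ)⁻¹ * (‖S c ω‖ * ‖d‖) * c := this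
          _ = (‖S c ω‖ * ‖d‖) * ((c:ℝ)⁻¹ * c) := by ring
          _ = ‖S c ω‖ * ‖d‖ := by rw [inv_mul_cancel₀ (ne_of_gt hc0), mul_one]
      nlinarith
  -- expected regret in an exploitation period of cycle c
  have hexploit : ∀ c : ℕ, 1 ≤ c →
      (∫ ω, (sSup ((fun u => ⟪u, z⟫) '' K) - ⟪G c ω, z⟫) ∂P) ≤ D * r / (c * ‖z‖) := by
    intro c hc
    have hc0 : (0:ℝ) < (c:ℝ) := by exact_mod_cast hc
    set gbd : Ω → ℝ := fun ω => (M / (‖z‖ * lam0 ^ 2 * c ^ 2)) * ‖S c ω‖ ^ 2 with hgbd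
    have hgbd_int : Integrable gbd P := ((hSbound c).1).const_mul _
    have hpt : ∀ ω, sSup ((fun u => ⟪u, z⟫) '' K) - ⟪G c ω, z⟫ ≤ gbd ω := by
      intro ω
      have h1 := pege_aux_greedy K ubar J hubar hJ hKb ustar hustarK hmax huniq hLip
        z hz (Zhat c ω) (G c ω) (hGK c ω) (hGmax c ω)
      have h2 : ‖Zhat c ω - z‖ ≤ ‖S c ω‖ / (lam0 * c) := hZd c hc ω
      have h3 : ‖Zhat c ω - z‖ ^ 2 ≤ (‖S c ω‖ / (lam0 * c)) ^ 2 := by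
        nlinarith [norm_nonneg (Zhat c ω - z)]
      have h4 : ((4 * J + 2 * ubar) / ‖z‖) * ‖Zhat c ω - z‖ ^ 2
          ≤ ((4 * J + 2 * ubar) / ‖z‖) * (‖S c ω‖ / (lam0 * c)) ^ 2 := by
        apply mul_le_mul_of_nonneg_left h3 (by positivity)
      have h5 : ((4 * J + 2 * ubar) / ‖z‖) * (‖S c ω‖ / (lam0 * c)) ^ 2 = gbd ω := by
        have hz' : ‖z‖ ≠ 0 := ne_of_gt hz0
        have hl' : lam0 ≠ 0 := ne_of_gt hlam0
        have hc' : (c:ℝ) ≠ 0 := ne_of_gt hc0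
        simp only [hgbd, hM]
        field_simp
        try exact Or.inl trivial
      calc sSup ((fun u => ⟪u, z⟫) '' K) - ⟪G c ω, z⟫
          = ⟪ustar z, z⟫ - ⟪G c ω, z⟫ := by rw [hsSup]
        _ ≤ ((4 * J + 2 * ubar) / ‖z‖) * ‖Zhat c ω - z‖ ^ 2 := h1
        _ ≤ ((4 * J + 2 * ubar) / ‖z‖) * (‖S c ω‖ / (lam0 * c)) ^ 2 := h4
        _ = gbd ω := h5
    have hnn : ∀ ω, 0 ≤ sSup ((fun u => ⟪u, z⟫) '' K) - ⟪G c ω, z⟫ := by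
      intro ω
      have := hsSup_ge (G c ω) (hGK c ω)
      linarith
    calc ∫ ω, (sSup ((fun u => ⟪u, z⟫) '' K) - ⟪G c ω, z⟫) ∂P
        ≤ ∫ ω, gbd ω ∂P := by
          apply integral_mono_of_nonneg
          · filter_upwards with ω; exact hnn ω
          · exact hgbd_int
          · filter_upwards with ω; exact hpt ω
      _ = (M / (‖z‖ * lam0 ^ 2 * c ^ 2)) * ∫ ω, ‖S c ω‖ ^ 2 ∂P := by
          simp only [hgbd]
          rw [integral_const_mul]
      _ ≤ (M / (‖z‖ * lam0 ^ 2 * c ^ 2)) * ((c * r : ℕ) * (4 * σ₀ ^ 2 * ubar ^ 2)) := by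
          apply mul_le_mul_of_nonneg_left (hSbound c).2 (by positivity)
      _ = D * r / (c * ‖z‖) := by
          rw [hD]
          push_cast
          field_simp
  -- expected regret in an exploration period
  have hexplore : ∀ k : Fin r,
      (∫ ω, (sSup ((fun u => ⟪u, z⟫) '' K) - ⟪b k, z⟫) ∂P) ≤ 2 * ubar * ‖z‖ := by
    intro k
    have hconst : (∫ _ω, (sSup ((fun u => ⟪u, z⟫) '' K) - ⟪b k, z⟫) ∂P)
        = sSup ((fun u => ⟪u, z⟫) '' K) - ⟪b k, z⟫ := by
      rw [integral_const]
      simp only [probReal_univ, one_smul]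
    rw [hconst, hsSup]
    have h1 : ⟪ustar z, z⟫ ≤ ‖ustar z‖ * ‖z‖ := real_inner_le_norm _ _
    have h2 : -⟪b k, z⟫ ≤ ‖b k‖ * ‖z‖ := by
      have h3 : |⟪b k, z⟫| ≤ ‖b k‖ * ‖z‖ := abs_real_inner_le_norm _ _
      linarith [neg_abs_le ⟪b k, z⟫]
    have hb1 := hKb _ (hustarK z hz)
    have hb2 := hKb _ (hbK k)
    nlinarith [norm_nonneg (ustar z), norm_nonneg (b k)]
  -- per-cycle regret bound
  have hcycle : ∀ c : ℕ, 1 ≤ c →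
      ∑ t ∈ Finset.Ioc (pegeStart r c) (pegeStart r (c + 1)), f t
        ≤ K₃ * (‖z‖ + 1 / ‖z‖) * r := by
    intro c hc
    have hc0 : (0:ℝ) < (c:ℝ) := by exact_mod_cast hc
    rw [pegeStep r c hc, show pegeStart r c + r + c = pegeStart r c + (r + c) by omega,
      pege_sum_Ioc_block f (pegeStart r c) (r + c), Finset.sum_range_add]
    have hexp_bound : ∑ j ∈ Finset.range r, f (pegeStart r c + 1 + j) ≤ r * (2 * ubar * ‖z‖) := by
      have hterm : ∀ j ∈ Finset.range r, f (pegeStart r c + 1 + j) ≤ 2 * ubar * ‖z‖ := by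
        intro j hj
        have hjr : j < r := Finset.mem_range.1 hj
        have heq : pegeStart r c + 1 + j = pegeStart r c + ((⟨j, hjr⟩ : Fin r) : ℕ) + 1 := by
          simp only []; omega
        rw [hf]
        simp only [heq, hVb c hc ⟨j, hjr⟩]
        exact hexplore ⟨j, hjr⟩
      calc ∑ j ∈ Finset.range r, f (pegeStart r c + 1 + j)
          ≤ ∑ _j ∈ Finset.range r, (2 * ubar * ‖z‖) := Finset.sum_le_sum hterm
        _ = r * (2 * ubar * ‖z‖) := by rw [Finset.sum_const, Finset.card_range, nsmul_eq_mul]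
    have hexploit_bound : ∑ j ∈ Finset.range c, f (pegeStart r c + 1 + (r + j))
        ≤ D * r / ‖z‖ := by
      have hterm : ∀ j ∈ Finset.range c, f (pegeStart r c + 1 + (r + j))
          ≤ D * r / (c * ‖z‖) := by
        intro j hj
        have hjc : j < c := Finset.mem_range.1 hj
        have heq : pegeStart r c + 1 + (r + j) = pegeStart r c + r + (j + 1) := by omega
        rw [hf]
        simp only [heq, hVG c hc (j + 1) (by omega) (by omega)]
        exact hexploit c hc
      calc ∑ j ∈ Finset.range c, f (pegeStart r c + 1 + (r + j))
          ≤ ∑ _j ∈ Finset.range c, (D * r / (c * ‖z‖)) := Finset.sum_le_sum hterm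
        _ = c * (D * r / (c * ‖z‖)) := by rw [Finset.sum_const, Finset.card_range, nsmul_eq_mul]
        _ = D * r / ‖z‖ := by field_simp
    have halg : r * (2 * ubar * ‖z‖) + D * r / ‖z‖ ≤ K₃ * (‖z‖ + 1 / ‖z‖) * r := by
      rw [hK₃]
      have hrpos : (0:ℝ) < (r:ℝ) := by positivity
      have e1 : (2 * ubar + D) * (‖z‖ + 1 / ‖z‖) * r
          = r * (2 * ubar * ‖z‖) + D * r / ‖z‖
            + (2 * ubar * (1/‖z‖) + D * ‖z‖) * r := by
        field_simp
        ring
      rw [e1]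
      have : 0 ≤ (2 * ubar * (1/‖z‖) + D * ‖z‖) * r := by positivity
      linarith
    linarith
  -- choose the number of cycles C
  have hex : ∃ c, T ≤ pegeStart r (c + 1) := ⟨T, pegeStart_ge r T hr1⟩
  set C := Nat.find hex with hC
  have hCspec : T ≤ pegeStart r (C + 1) := Nat.find_spec hex
  have hC1 : 1 ≤ C := by
    by_contra h
    have hc0 : C = 0 := by omega
    have := hCspec
    rw [hc0, show (0+1 : ℕ) = 1 from rfl, pegeStart_one] at this
    omega
  have hCltT : pegeStart r C < T := by
    have hmin : ¬ T ≤ pegeStart r ((C - 1) + 1) := Nat.find_min hex (by omega)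
    have he : (C - 1) + 1 = C := by omega
    rw [he] at hmin; omega
  -- C ≤ 3 √T
  have hTpos : (0:ℝ) < (T:ℝ) := by
    have : 1 ≤ T := by omega
    exact_mod_cast Nat.lt_of_lt_of_le Nat.zero_lt_one this
  have hsqT : (1:ℝ) ≤ Real.sqrt T := by
    have h2T : (1:ℝ) ≤ (T:ℝ) := by exact_mod_cast (by omega : 1 ≤ T)
    nlinarith [Real.sq_sqrt hTpos.le, Real.sqrt_nonneg (T:ℝ)]
  have hCbound : (C:ℝ) ≤ 3 * Real.sqrt T := by
    obtain ⟨m, hm⟩ : ∃ m, C = m + 1 := ⟨C - 1, by omega⟩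
    rw [hm] at hCltT ⊢
    have hp : pegeStart r (m + 1) = m * r + m * (m + 1) / 2 := by
      unfold pegeStart; simp only [Nat.add_sub_cancel]
    obtain ⟨k, hk⟩ := Nat.even_mul_succ_self m
    have hmm : m * (m + 1) < 2 * T := by omega
    have hmR : ((m:ℝ)) ^ 2 < 2 * T := by
      have h1 : ((m:ℝ)) * (m + 1) < 2 * T := by exact_mod_cast hmm
      nlinarith [Nat.cast_nonneg (α := ℝ) m]
    have hmlt : (m:ℝ) < Real.sqrt (2 * T) := by
      rw [← Real.lt_sqrt (Nat.cast_nonneg m)] at hmR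
      exact hmR
    have hsq2 : Real.sqrt (2 * T) = Real.sqrt 2 * Real.sqrt T := Real.sqrt_mul (by norm_num) _
    have hs2 : Real.sqrt 2 ≤ 2 := by
      nlinarith [Real.sq_sqrt (by norm_num : (0:ℝ) ≤ 2), Real.sqrt_nonneg 2]
    have : (m:ℝ) < 2 * Real.sqrt T := by
      calc (m:ℝ) < Real.sqrt (2*T) := hmlt
        _ = Real.sqrt 2 * Real.sqrt T := hsq2
        _ ≤ 2 * Real.sqrt T := by nlinarith [Real.sqrt_nonneg (T:ℝ)]
    push_cast
    linarith
  -- assemble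
  have step1 : ∑ t ∈ Finset.Icc 1 T, f t ≤ ∑ t ∈ Finset.Icc 1 (pegeStart r (C + 1)), f t := by
    apply Finset.sum_le_sum_of_subset_of_nonneg
    · exact Finset.Icc_subset_Icc_right hCspec
    · intro t ht _
      exact hf_nonneg t (Finset.mem_Icc.1 ht).1
  have step2 : ∑ t ∈ Finset.Icc 1 (pegeStart r (C + 1)), f t
      ≤ C * (K₃ * (‖z‖ + 1 / ‖z‖) * r) := by
    rw [pege_sum_Icc_cycles f r C]
    calc ∑ c ∈ Finset.Icc 1 C, ∑ t ∈ Finset.Ioc (pegeStart r c) (pegeStart r (c + 1)), f t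
        ≤ ∑ c ∈ Finset.Icc 1 C, (K₃ * (‖z‖ + 1 / ‖z‖) * r) := by
          apply Finset.sum_le_sum
          intro c hc
          exact hcycle c (Finset.mem_Icc.1 hc).1
      _ = C * (K₃ * (‖z‖ + 1 / ‖z‖) * r) := by
          rw [Finset.sum_const, Nat.card_Icc, nsmul_eq_mul]
          norm_num
  have step3 : (C:ℝ) * (K₃ * (‖z‖ + 1 / ‖z‖) * r)
      ≤ 3 * K₃ * (‖z‖ + 1 / ‖z‖) * r * Real.sqrt T := by
    have hpos : (0:ℝ) ≤ K₃ * (‖z‖ + 1 / ‖z‖) * r := by positivity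
    calc (C:ℝ) * (K₃ * (‖z‖ + 1 / ‖z‖) * r)
        ≤ (3 * Real.sqrt T) * (K₃ * (‖z‖ + 1 / ‖z‖) * r) :=
          mul_le_mul_of_nonneg_right hCbound hpos
      _ = 3 * K₃ * (‖z‖ + 1 / ‖z‖) * r * Real.sqrt T := by ring
  calc ∑ t ∈ Finset.Icc 1 T, f t
      ≤ ∑ t ∈ Finset.Icc 1 (pegeStart r (C + 1)), f t := step1
    _ ≤ C * (K₃ * (‖z‖ + 1 / ‖z‖) * r) := step2
    _ ≤ 3 * K₃ * (‖z‖ + 1 / ‖z‖) * r * Real.sqrt T := step3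
end

section
/- There exists a positive constant h₁ depending only on σ₀, ū, and λ₀ such that for every z ∈ ℝ^r and every cycle count c ≥ 1, E[ ‖Ẑ(c) − z‖² ] ≤ h₁ · r / c, where Ẑ(c) = z + (1/c)(∑_{k=1}^r b_k b_k′)^{-1} ∑_{s=1}^c ∑_{k=1}^r b_k W^{b_k}(s). -/
open MeasureTheory ProbabilityTheory Real
open scoped RealInnerProductSpace ENNReal NNReal

lemma sq_le_exp_add_exp (t : ℝ) : t ^ 2 ≤ Real.exp t + Real.exp (-t) := by
  have key : ∀ u : ℝ, 0 ≤ u → u ^ 2 ≤ Real.exp u + Real.exp (-u) := by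
    intro u hu
    have h1 : 1 + u / 4 ≤ Real.exp (u / 4) := by
      have := add_one_le_exp (u / 4); linarith
    have h2 : (1 + u / 4) ^ 4 ≤ Real.exp (u / 4) ^ 4 :=
      pow_le_pow_left₀ (by positivity) h1 4
    have h3 : Real.exp (u / 4) ^ 4 = Real.exp u := by
      rw [← Real.exp_nat_mul]; ring_nf
    have h4 : 0 < Real.exp (-u) := Real.exp_pos _
    nlinarith [mul_nonneg (sq_nonneg (u - 4)) (show (0:ℝ) ≤ u ^ 2 + 24 * u + 16 by positivity)]
  rcases le_total 0 t with h | h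
  · exact key t h
  · have := key (-t) (by linarith)
    simpa [neg_neg, add_comm] using this

open MeasureTheory in
lemma second_moment_bound {Ω : Type} [MeasurableSpace Ω] (P : Measure Ω)
    [IsProbabilityMeasure P] (σ₀ : ℝ) (hσ₀ : 0 < σ₀) (X : Ω → ℝ) (hm : Measurable X)
    (hint : ∀ x : ℝ, Integrable (fun ω => Real.exp (x * X ω)) P)
    (hmgf : ∀ x : ℝ, ∫ ω, Real.exp (x * X ω) ∂P ≤ Real.exp (x ^ 2 * σ₀ ^ 2 / 2)) :
    Integrable (fun ω => X ω ^ 2) P ∧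
      ∫ ω, X ω ^ 2 ∂P ≤ 2 * Real.exp (1 / 2) * σ₀ ^ 2 := by
  set g : Ω → ℝ := fun ω =>
    σ₀ ^ 2 * (Real.exp ((1 / σ₀) * X ω) + Real.exp ((-(1 / σ₀)) * X ω)) with hg_def
  have hg : Integrable g P := (Integrable.add (hint (1 / σ₀)) (hint (-(1 / σ₀)))).const_mul _
  have hbd : ∀ ω, X ω ^ 2 ≤ g ω := by
    intro ω
    have := sq_le_exp_add_exp (X ω / σ₀)
    rw [show X ω / σ₀ = 1 / σ₀ * X ω by ring, ← neg_mul] at this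
    have h2 : (1 / σ₀ * X ω) ^ 2 * σ₀ ^ 2 = X ω ^ 2 := by field_simp
    simp only [hg_def]
    nlinarith [sq_nonneg σ₀]
  have hXint : Integrable (fun ω => X ω ^ 2) P := by
    apply hg.mono' ((hm.pow_const 2).aestronglyMeasurable)
    filter_upwards with ω
    rw [Real.norm_eq_abs, abs_of_nonneg (sq_nonneg _)]
    exact hbd ω
  refine ⟨hXint, ?_⟩
  have h5 : ∫ ω, X ω ^ 2 ∂P ≤ ∫ ω, g ω ∂P := integral_mono hXint hg hbd
  have h6 : ∫ ω, g ω ∂P = σ₀ ^ 2 * ((∫ ω, Real.exp ((1 / σ₀) * X ω) ∂P)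
      + ∫ ω, Real.exp ((-(1 / σ₀)) * X ω) ∂P) := by
    rw [hg_def, integral_const_mul, integral_add (hint _) (hint _)]
  have hx : ∀ x : ℝ, x = 1 / σ₀ ∨ x = -(1 / σ₀) → x ^ 2 * σ₀ ^ 2 / 2 = 1 / 2 := by
    rintro x (rfl | rfl) <;> field_simp
  have h7 := hmgf (1 / σ₀)
  have h8 := hmgf (-(1 / σ₀))
  rw [hx _ (Or.inl rfl)] at h7
  rw [hx _ (Or.inr rfl)] at h8
  nlinarith [sq_nonneg σ₀, Real.exp_pos (1 / (2:ℝ))]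


/-- **Bound on squared norm difference** (Lemma 5 of Rusmevichientong–Tsitsiklis): there
is a constant `h₁` depending only on `σ₀, ū, lam0` such that the OLS estimate `Ẑ(c)` after
`c` exploration cycles satisfies `E[‖Ẑ(c) − z‖²] ≤ h₁ r / c`. -/
theorem stmt8 (σ₀ ubar lam0 : ℝ) (hσ₀ : 0 < σ₀) (hubar : 0 < ubar) (hlam0 : 0 < lam0) :
    ∃ h₁ : ℝ, 0 < h₁ ∧
      ∀ (r : ℕ), 2 ≤ r →
      ∀ (b : Fin r → EuclideanSpace ℝ (Fin r)), LinearIndependent ℝ b →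
        (∀ k, ‖b k‖ ≤ ubar) →
        (∀ v : EuclideanSpace ℝ (Fin r), lam0 * ‖v‖ ^ 2 ≤ ∑ k, ⟪b k, v⟫ ^ 2) →
      ∀ (Ω : Type) (mΩ : MeasurableSpace Ω) (P : Measure Ω), IsProbabilityMeasure P →
      ∀ (W : Fin r → ℕ → Ω → ℝ), (∀ k s, Measurable (W k s)) →
        iIndepFun
          (fun p : Fin r × ℕ => W p.1 p.2) P →
        (∀ k s, Integrable (W k s) P) →
        (∀ k s, ∫ ω, W k s ω ∂P = 0) →
        (∀ k s (x : ℝ), Integrable (fun ω => Real.exp (x * W k s ω)) P) →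
        (∀ k s (x : ℝ), ∫ ω, Real.exp (x * W k s ω) ∂P ≤ Real.exp (x ^ 2 * σ₀ ^ 2 / 2)) →
      ∀ (z : EuclideanSpace ℝ (Fin r)) (Zhat : ℕ → Ω → EuclideanSpace ℝ (Fin r)),
        (∀ c ω, ∑ k, ⟪b k, Zhat c ω - z⟫ • b k
            = (c : ℝ)⁻¹ • ∑ s ∈ Finset.Icc 1 c, ∑ k, W k s ω • b k) →
      ∀ c : ℕ, 1 ≤ c →
        ∫ ω, ‖Zhat c ω - z‖ ^ 2 ∂P ≤ h₁ * r / c := by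
  refine ⟨2 * Real.exp (1 / 2) * σ₀ ^ 2 * ubar ^ 2 / lam0 ^ 2, by positivity, ?_⟩
  intro r hr b hli hub hev Ω mΩ P hP W hWm hWindep hWint hWmean hWexp hWmgf z Zhat hZ c hc
  set M := 2 * Real.exp (1 / 2) * σ₀ ^ 2 with hM
  have hM0 : 0 < M := by positivity
  have hc0 : (0 : ℝ) < (c : ℝ) := by exact_mod_cast hc
  have hsq : ∀ k s, Integrable (fun ω => W k s ω ^ 2) P ∧ ∫ ω, W k s ω ^ 2 ∂P ≤ M :=
    fun k s => second_moment_bound P σ₀ hσ₀ (W k s) (hWm k s) (hWexp k s) (hWmgf k s)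
  set T : Finset (Fin r × ℕ) := Finset.univ ×ˢ Finset.Icc 1 c with hT
  set S : Ω → EuclideanSpace ℝ (Fin r) := fun ω => ∑ p ∈ T, W p.1 p.2 ω • b p.1 with hS
  have hSsum : ∀ ω, (∑ s ∈ Finset.Icc 1 c, ∑ k, W k s ω • b k) = S ω := by
    intro ω
    rw [hS]
    simp only [hT, Finset.sum_product]
    exact Finset.sum_comm
  have hnormS : ∀ ω, ‖S ω‖ ^ 2
      = ∑ p ∈ T, ∑ q ∈ T, (W p.1 p.2 ω * W q.1 q.2 ω) * ⟪b p.1, b q.1⟫ := by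
    intro ω
    rw [← real_inner_self_eq_norm_sq, hS]
    simp only
    rw [sum_inner]
    refine Finset.sum_congr rfl fun p _ => ?_
    rw [inner_sum]
    refine Finset.sum_congr rfl fun q _ => ?_
    rw [real_inner_smul_left, real_inner_smul_right]
    ring
  have hterm_int : ∀ p ∈ T, ∀ q ∈ T,
      Integrable (fun ω => (W p.1 p.2 ω * W q.1 q.2 ω) * ⟪b p.1, b q.1⟫) P := by
    intro p _ q _
    apply Integrable.mul_const
    by_cases hpq : p = q
    · subst hpq
      simpa [pow_two] using (hsq p.1 p.2).1
    · exact (hWindep.indepFun hpq).integrable_mul (hWint p.1 p.2) (hWint q.1 q.2)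
  have hterm_bound : ∀ p ∈ T, ∀ q ∈ T,
      (∫ ω, (W p.1 p.2 ω * W q.1 q.2 ω) * ⟪b p.1, b q.1⟫ ∂P)
        ≤ if q = p then M * ubar ^ 2 else 0 := by
    intro p hp q hq
    rw [integral_mul_const]
    by_cases hpq : q = p
    · subst hpq
      rw [if_pos rfl]
      have e1 : ∫ ω, W q.1 q.2 ω * W q.1 q.2 ω ∂P ≤ M := by
        have := (hsq q.1 q.2).2
        simpa [pow_two] using this
      have e0 : (0 : ℝ) ≤ ∫ ω, W q.1 q.2 ω * W q.1 q.2 ω ∂P :=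
        integral_nonneg fun ω => mul_self_nonneg _
      have e2 : ⟪b q.1, b q.1⟫ ≤ ubar ^ 2 := by
        rw [real_inner_self_eq_norm_sq]
        exact pow_le_pow_left₀ (norm_nonneg _) (hub q.1) 2
      exact mul_le_mul e1 e2 real_inner_self_nonneg hM0.le
    · rw [if_neg hpq]
      have hind : IndepFun (W p.1 p.2) (W q.1 q.2) P :=
        hWindep.indepFun (fun h => hpq h.symm)
      have h0 : ∫ ω, W p.1 p.2 ω * W q.1 q.2 ω ∂P = 0 := by
        have h1 : ∫ ω, W p.1 p.2 ω * W q.1 q.2 ω ∂P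
            = (∫ ω, W p.1 p.2 ω ∂P) * ∫ ω, W q.1 q.2 ω ∂P :=
          hind.integral_mul_eq_mul_integral (hWint p.1 p.2).aestronglyMeasurable
            (hWint q.1 q.2).aestronglyMeasurable
        rw [h1, hWmean, zero_mul]
      rw [h0, zero_mul]
  have hSint : Integrable (fun ω => ‖S ω‖ ^ 2) P := by
    rw [funext hnormS]
    exact integrable_finset_sum _ fun p hp => integrable_finset_sum _ fun q hq =>
      hterm_int p hp q hq
  have hcard : (T.card : ℝ) = (r : ℝ) * (c : ℝ) := by
    simp [hT, Finset.card_product, Nat.card_Icc]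
  have hSval : ∫ ω, ‖S ω‖ ^ 2 ∂P ≤ ((r : ℝ) * (c : ℝ)) * (M * ubar ^ 2) := by
    calc ∫ ω, ‖S ω‖ ^ 2 ∂P
        = ∑ p ∈ T, ∑ q ∈ T, ∫ ω, (W p.1 p.2 ω * W q.1 q.2 ω) * ⟪b p.1, b q.1⟫ ∂P := by
          rw [funext hnormS, integral_finset_sum _
            (fun p hp => integrable_finset_sum _ fun q hq => hterm_int p hp q hq)]
          exact Finset.sum_congr rfl fun p hp => integral_finset_sum _ (hterm_int p hp)
      _ ≤ ∑ p ∈ T, ∑ q ∈ T, (if q = p then M * ubar ^ 2 else 0) :=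
          Finset.sum_le_sum fun p hp => Finset.sum_le_sum fun q hq =>
            hterm_bound p hp q hq
      _ = ∑ p ∈ T, M * ubar ^ 2 := by
          refine Finset.sum_congr rfl fun p hp => ?_
          rw [Finset.sum_ite_eq' T p fun _ => M * ubar ^ 2, if_pos hp]
      _ = (T.card : ℝ) * (M * ubar ^ 2) := by
          rw [Finset.sum_const, nsmul_eq_mul]
      _ = ((r : ℝ) * (c : ℝ)) * (M * ubar ^ 2) := by rw [hcard]
  have hA : ∀ ω, ‖Zhat c ω - z‖ ^ 2 ≤ lam0⁻¹ ^ 2 * ((c : ℝ)⁻¹ ^ 2 * ‖S ω‖ ^ 2) := by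
    intro ω
    set D := Zhat c ω - z with hD
    have h1 := hev D
    have h2 : (∑ k, ⟪b k, D⟫ ^ 2) = ⟪∑ k, ⟪b k, D⟫ • b k, D⟫ := by
      rw [sum_inner]
      exact Finset.sum_congr rfl fun k _ => by rw [real_inner_smul_left]; ring
    have h3 : (∑ k, ⟪b k, D⟫ • b k) = (c : ℝ)⁻¹ • S ω := by
      rw [hD, hZ c ω, hSsum ω]
    have h4 : ⟪(c : ℝ)⁻¹ • S ω, D⟫ ≤ ‖(c : ℝ)⁻¹ • S ω‖ * ‖D‖ := real_inner_le_norm _ _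
    have h5 : ‖(c : ℝ)⁻¹ • S ω‖ = (c : ℝ)⁻¹ * ‖S ω‖ := by
      rw [norm_smul, Real.norm_eq_abs, abs_of_pos (by positivity)]
    have h6 : lam0 * ‖D‖ ^ 2 ≤ ((c : ℝ)⁻¹ * ‖S ω‖) * ‖D‖ := by
      rw [← h5]
      calc lam0 * ‖D‖ ^ 2 ≤ ∑ k, ⟪b k, D⟫ ^ 2 := h1
        _ = ⟪∑ k, ⟪b k, D⟫ • b k, D⟫ := h2
        _ = ⟪(c : ℝ)⁻¹ • S ω, D⟫ := by rw [h3]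
        _ ≤ ‖(c : ℝ)⁻¹ • S ω‖ * ‖D‖ := h4
    rcases eq_or_lt_of_le (norm_nonneg D) with h0 | h0
    · calc ‖D‖ ^ 2 = 0 := by rw [← h0]; ring
        _ ≤ lam0⁻¹ ^ 2 * ((c : ℝ)⁻¹ ^ 2 * ‖S ω‖ ^ 2) := by positivity
    · have h7 : ‖D‖ ≤ lam0⁻¹ * ((c : ℝ)⁻¹ * ‖S ω‖) := by
        have h8 : lam0 * ‖D‖ * ‖D‖ ≤ ((c : ℝ)⁻¹ * ‖S ω‖) * ‖D‖ := by nlinarith [h6]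
        have h9 : lam0 * ‖D‖ ≤ (c : ℝ)⁻¹ * ‖S ω‖ := le_of_mul_le_mul_right h8 h0
        calc ‖D‖ = lam0⁻¹ * (lam0 * ‖D‖) := by field_simp
          _ ≤ lam0⁻¹ * ((c : ℝ)⁻¹ * ‖S ω‖) := mul_le_mul_of_nonneg_left h9 (by positivity)
      calc ‖D‖ ^ 2 ≤ (lam0⁻¹ * ((c : ℝ)⁻¹ * ‖S ω‖)) ^ 2 :=
            pow_le_pow_left₀ (norm_nonneg _) h7 2
        _ = lam0⁻¹ ^ 2 * ((c : ℝ)⁻¹ ^ 2 * ‖S ω‖ ^ 2) := by ring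
  have hVint : Integrable (fun ω => lam0⁻¹ ^ 2 * ((c : ℝ)⁻¹ ^ 2 * ‖S ω‖ ^ 2)) P :=
    (hSint.const_mul _).const_mul _
  have hfinal : ∫ ω, ‖Zhat c ω - z‖ ^ 2 ∂P
      ≤ ∫ ω, lam0⁻¹ ^ 2 * ((c : ℝ)⁻¹ ^ 2 * ‖S ω‖ ^ 2) ∂P :=
    integral_mono_of_nonneg (Filter.Eventually.of_forall fun ω => sq_nonneg _) hVint
      (Filter.Eventually.of_forall hA)
  have hcalc : ∫ ω, lam0⁻¹ ^ 2 * ((c : ℝ)⁻¹ ^ 2 * ‖S ω‖ ^ 2) ∂P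
      = lam0⁻¹ ^ 2 * ((c : ℝ)⁻¹ ^ 2 * ∫ ω, ‖S ω‖ ^ 2 ∂P) := by
    rw [integral_const_mul, integral_const_mul]
  refine hfinal.trans ?_
  rw [hcalc]
  have hstep : lam0⁻¹ ^ 2 * ((c : ℝ)⁻¹ ^ 2 * ∫ ω, ‖S ω‖ ^ 2 ∂P)
      ≤ lam0⁻¹ ^ 2 * ((c : ℝ)⁻¹ ^ 2 * (((r : ℝ) * (c : ℝ)) * (M * ubar ^ 2))) := by
    apply mul_le_mul_of_nonneg_left _ (by positivity)
    exact mul_le_mul_of_nonneg_left hSval (by positivity)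
  refine hstep.trans_eq ?_
  rw [hM]
  field_simp
end

section
/- Under the PEGE setup, there exists a positive constant h₂ depending only on σ₀, ū, λ₀, and J such that for every z ∈ ℝ^r with z ≠ 0 and every cycle c ≥ 1, the greedy arm G(c) = argmax_{v ∈ U_r} v′Ẑ(c) satisfies E[ max_{u ∈ U_r} z′(u − G(c)) ] ≤ h₂ · r / (c · ‖z‖). -/
open MeasureTheory ProbabilityTheory Real
open scoped RealInnerProductSpace ENNReal NNReal

open Real

lemma sq_le_exp_add (x : ℝ) : x^2 ≤ 4*(Real.exp x + Real.exp (-x)) := by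
  have h3 : (1 + |x|/2) ≤ Real.exp (|x|/2) := by
    have := Real.add_one_le_exp (|x|/2); linarith
  have h2 : (1 + |x|/2)^2 ≤ Real.exp |x| := by
    calc (1 + |x|/2)^2 ≤ (Real.exp (|x|/2))^2 := by
          apply pow_le_pow_left₀ (by positivity) h3
      _ = Real.exp |x| := by rw [sq, ← Real.exp_add]; ring_nf
  have h4 : Real.exp |x| ≤ Real.exp x + Real.exp (-x) := by
    rcases abs_cases x with ⟨h, _⟩ | ⟨h, _⟩ <;> rw [h] <;>
      nlinarith [Real.exp_pos x, Real.exp_pos (-x)]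
  nlinarith [sq_abs x, abs_nonneg x]

lemma norm_normalize_sub_le {E : Type*} [NormedAddCommGroup E] [NormedSpace ℝ E]
    (x y : E) (hx : x ≠ 0) (hy : y ≠ 0) :
    ‖‖x‖⁻¹ • x - ‖y‖⁻¹ • y‖ ≤ 2 * ‖x - y‖ / ‖x‖ := by
  have hx0 : (0:ℝ) < ‖x‖ := norm_pos_iff.mpr hx
  have hy0 : (0:ℝ) < ‖y‖ := norm_pos_iff.mpr hy
  have key : ‖x‖⁻¹ • x - ‖y‖⁻¹ • y = ‖x‖⁻¹ • (x - y) + (‖x‖⁻¹ - ‖y‖⁻¹) • y := by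
    rw [smul_sub, sub_smul]; abel
  rw [key]
  have h1 : ‖‖x‖⁻¹ • (x - y)‖ = ‖x - y‖ / ‖x‖ := by
    rw [norm_smul, norm_inv, norm_norm]; ring
  have h2 : ‖(‖x‖⁻¹ - ‖y‖⁻¹) • y‖ ≤ ‖x - y‖ / ‖x‖ := by
    rw [norm_smul, Real.norm_eq_abs]
    have heq : |‖x‖⁻¹ - ‖y‖⁻¹| * ‖y‖ = |‖y‖ - ‖x‖| / ‖x‖ := by
      have hd : ‖x‖⁻¹ - ‖y‖⁻¹ = (‖y‖ - ‖x‖)/(‖x‖*‖y‖) := by field_simp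
      rw [hd, abs_div, abs_of_pos (mul_pos hx0 hy0)]
      field_simp
    rw [heq]
    have : |‖y‖ - ‖x‖| ≤ ‖x - y‖ := by
      rw [abs_sub_comm]; exact (abs_norm_sub_norm_le x y).trans_eq rfl
    gcongr
  calc ‖‖x‖⁻¹ • (x - y) + (‖x‖⁻¹ - ‖y‖⁻¹) • y‖
      ≤ ‖‖x‖⁻¹ • (x - y)‖ + ‖(‖x‖⁻¹ - ‖y‖⁻¹) • y‖ := norm_add_le _ _
    _ ≤ ‖x - y‖ / ‖x‖ + ‖x - y‖ / ‖x‖ := by rw [h1]; linarith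
    _ = 2 * ‖x - y‖ / ‖x‖ := by ring


lemma gap_bound {n : ℕ} (K : Set (EuclideanSpace ℝ (Fin n))) (ubar J : ℝ)
    (hub : 0 ≤ ubar) (hJ : 0 ≤ J)
    (hKb : ∀ u ∈ K, ‖u‖ ≤ ubar)
    (ustar : EuclideanSpace ℝ (Fin n) → EuclideanSpace ℝ (Fin n))
    (hmem : ∀ z, z ≠ 0 → ustar z ∈ K)
    (hopt : ∀ z, z ≠ 0 → ∀ v ∈ K, ⟪v, z⟫ ≤ ⟪ustar z, z⟫)
    (huniq : ∀ z, z ≠ 0 → ∀ v ∈ K, (∀ u ∈ K, ⟪u, z⟫ ≤ ⟪v, z⟫) → v = ustar z)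
    (hlip : ∀ z y : EuclideanSpace ℝ (Fin n), ‖z‖ = 1 → ‖y‖ = 1 →
      ‖ustar z - ustar y‖ ≤ J * ‖z - y‖)
    (z zh g : EuclideanSpace ℝ (Fin n)) (hz : z ≠ 0) (hg : g ∈ K)
    (hgopt : ∀ v ∈ K, ⟪v, zh⟫ ≤ ⟪g, zh⟫) :
    ⟪ustar z, z⟫ - ⟪g, z⟫ ≤ (2*J + 2*ubar) * ‖zh - z‖^2 / ‖z‖ := by
  have hz0 : (0:ℝ) < ‖z‖ := norm_pos_iff.mpr hz
  have homog : ∀ y : EuclideanSpace ℝ (Fin n), y ≠ 0 → ustar (‖y‖⁻¹ • y) = ustar y := by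
    intro y hy
    have hy0 : (0:ℝ) < ‖y‖ := norm_pos_iff.mpr hy
    have hny : (‖y‖⁻¹ • y) ≠ 0 := smul_ne_zero (by positivity) hy
    refine huniq y hy _ (hmem _ hny) ?_
    intro u hu
    have h := hopt _ hny u hu
    rw [real_inner_smul_right, real_inner_smul_right] at h
    have := mul_le_mul_of_nonneg_left h (le_of_lt hy0)
    rw [← mul_assoc, ← mul_assoc, mul_inv_cancel₀ (ne_of_gt hy0), one_mul, one_mul] at this
    exact this
  by_cases hzh : zh = 0
  · subst hzh
    have hnorm : ‖(0:EuclideanSpace ℝ (Fin n)) - z‖ = ‖z‖ := by simp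
    have h1 : ⟪ustar z, z⟫ - ⟪g, z⟫ = ⟪ustar z - g, z⟫ := by rw [inner_sub_left]
    have h2 : ⟪ustar z - g, z⟫ ≤ ‖ustar z - g‖ * ‖z‖ := real_inner_le_norm _ _
    have h3 : ‖ustar z - g‖ ≤ 2 * ubar := by
      calc ‖ustar z - g‖ ≤ ‖ustar z‖ + ‖g‖ := norm_sub_le _ _
        _ ≤ ubar + ubar := add_le_add (hKb _ (hmem z hz)) (hKb _ hg)
        _ = 2 * ubar := by ring
    rw [hnorm]
    rw [h1]
    calc ⟪ustar z - g, z⟫ ≤ (2*ubar) * ‖z‖ :=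
          h2.trans (mul_le_mul_of_nonneg_right h3 hz0.le)
      _ ≤ (2*J + 2*ubar) * ‖z‖^2 / ‖z‖ := by
          have hzz : ‖z‖^2/‖z‖ = ‖z‖ := by rw [sq]; field_simp
          rw [mul_div_assoc, hzz]
          nlinarith
  · have hzh0 : (0:ℝ) < ‖zh‖ := norm_pos_iff.mpr hzh
    have hG : g = ustar zh := huniq zh hzh g hg hgopt
    have hdist : ‖ustar z - ustar zh‖ ≤ 2 * J * ‖zh - z‖ / ‖z‖ := by
      have h1 := hlip (‖z‖⁻¹ • z) (‖zh‖⁻¹ • zh)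
        (norm_smul_inv_norm hz) (norm_smul_inv_norm hzh)
      rw [homog z hz, homog zh hzh] at h1
      have h2 : ‖‖z‖⁻¹ • z - ‖zh‖⁻¹ • zh‖ ≤ 2 * ‖z - zh‖ / ‖z‖ :=
        norm_normalize_sub_le z zh hz hzh
      calc ‖ustar z - ustar zh‖ ≤ J * ‖‖z‖⁻¹ • z - ‖zh‖⁻¹ • zh‖ := h1
        _ ≤ J * (2 * ‖z - zh‖ / ‖z‖) := mul_le_mul_of_nonneg_left h2 hJ
        _ = 2 * J * ‖zh - z‖ / ‖z‖ := by rw [norm_sub_rev]; ring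
    have hsplit : ⟪ustar z, z⟫ - ⟪g, z⟫
        = ⟪ustar z - g, z - zh⟫ + ⟪ustar z - g, zh⟫ := by
      rw [inner_sub_left, inner_sub_left, inner_sub_right, inner_sub_right]; ring
    have hsecond : ⟪ustar z - g, zh⟫ ≤ 0 := by
      rw [inner_sub_left]
      have := hgopt (ustar z) (hmem z hz)
      linarith
    have hfirst : ⟪ustar z - g, z - zh⟫ ≤ 2 * J * ‖zh - z‖^2 / ‖z‖ := by
      calc ⟪ustar z - g, z - zh⟫ ≤ ‖ustar z - g‖ * ‖z - zh‖ := real_inner_le_norm _ _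
        _ ≤ (2 * J * ‖zh - z‖ / ‖z‖) * ‖zh - z‖ := by
            rw [norm_sub_rev z zh]
            exact mul_le_mul_of_nonneg_right (hG ▸ hdist) (norm_nonneg _)
        _ = 2 * J * ‖zh - z‖^2 / ‖z‖ := by ring
    have hle : (2:ℝ) * J * ‖zh - z‖^2 / ‖z‖ ≤ (2*J + 2*ubar) * ‖zh - z‖^2 / ‖z‖ := by
      gcongr
      nlinarith [sq_nonneg ‖zh - z‖]
    linarith [hsplit, hsecond, hfirst, hle]



lemma moment_bound {Ω : Type} [MeasurableSpace Ω] (P : Measure Ω) [IsProbabilityMeasure P]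
    (σ₀ : ℝ) (f : Ω → ℝ) (hm : Measurable f)
    (hint : ∀ x : ℝ, Integrable (fun ω => Real.exp (x * f ω)) P)
    (hmgf : ∀ x : ℝ, ∫ ω, Real.exp (x * f ω) ∂P ≤ Real.exp (x^2*σ₀^2/2)) :
    Integrable (fun ω => (f ω)^2) P ∧ ∫ ω, (f ω)^2 ∂P ≤ 8 * Real.exp (σ₀^2/2) := by
  have hi1 : Integrable (fun ω => Real.exp (f ω)) P := by simpa using hint 1
  have hi2 : Integrable (fun ω => Real.exp (-f ω)) P := by
    simpa [neg_one_mul] using hint (-1)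
  have hgint : Integrable (fun ω => 4*(Real.exp (f ω) + Real.exp (-f ω))) P :=
    (hi1.add hi2).const_mul 4
  have hbound : ∀ ω, ‖(f ω)^2‖ ≤ 4*(Real.exp (f ω) + Real.exp (-f ω)) := by
    intro ω
    rw [Real.norm_eq_abs, abs_of_nonneg (sq_nonneg _)]
    exact sq_le_exp_add (f ω)
  have hsq_int : Integrable (fun ω => (f ω)^2) P :=
    hgint.mono' ((hm.pow_const 2).aestronglyMeasurable) (Filter.Eventually.of_forall hbound)
  refine ⟨hsq_int, ?_⟩
  have h1 : ∫ ω, (f ω)^2 ∂P ≤ ∫ ω, 4*(Real.exp (f ω) + Real.exp (-f ω)) ∂P := by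
    apply integral_mono hsq_int hgint
    intro ω
    have := hbound ω
    rw [Real.norm_eq_abs, abs_of_nonneg (sq_nonneg _)] at this
    exact this
  have h2 : ∫ ω, 4*(Real.exp (f ω) + Real.exp (-f ω)) ∂P
      = 4 * ((∫ ω, Real.exp (f ω) ∂P) + ∫ ω, Real.exp (-f ω) ∂P) := by
    rw [MeasureTheory.integral_const_mul, integral_add hi1 hi2]
  have h3 : ∫ ω, Real.exp (f ω) ∂P ≤ Real.exp (σ₀^2/2) := by
    have := hmgf 1; simpa using this
  have h4 : ∫ ω, Real.exp (-f ω) ∂P ≤ Real.exp (σ₀^2/2) := by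
    have := hmgf (-1); simpa [neg_one_mul] using this
  calc ∫ ω, (f ω)^2 ∂P ≤ 4 * ((∫ ω, Real.exp (f ω) ∂P) + ∫ ω, Real.exp (-f ω) ∂P) := by
        rw [← h2]; exact h1
    _ ≤ 4 * (Real.exp (σ₀^2/2) + Real.exp (σ₀^2/2)) := by nlinarith
    _ = 8 * Real.exp (σ₀^2/2) := by ring

lemma M_bound {Ω : Type} [MeasurableSpace Ω] (P : Measure Ω) [IsProbabilityMeasure P]
    (B : ℝ) (hB : 0 ≤ B) (c : ℕ) (hc : 1 ≤ c) (f : ℕ → Ω → ℝ)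
    (hindep : ∀ s t, s ≠ t → IndepFun (f s) (f t) P)
    (hint : ∀ s, Integrable (f s) P)
    (hmean : ∀ s, ∫ ω, f s ω ∂P = 0)
    (hsqint : ∀ s, Integrable (fun ω => (f s ω)^2) P)
    (hsqbd : ∀ s, ∫ ω, (f s ω)^2 ∂P ≤ B) :
    Integrable (fun ω => ((c:ℝ)⁻¹ * ∑ s ∈ Finset.Icc 1 c, f s ω)^2) P ∧
    ∫ ω, ((c:ℝ)⁻¹ * ∑ s ∈ Finset.Icc 1 c, f s ω)^2 ∂P ≤ B / c := by
  have hc0 : (0:ℝ) < (c:ℝ) := by exact_mod_cast hc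
  have hprod : ∀ s t, Integrable (fun ω => f s ω * f t ω) P := by
    intro s t
    by_cases h : s = t
    · subst h; simpa [sq] using hsqint s
    · exact (hindep s t h).integrable_mul (hint s) (hint t)
  have hexp : ∀ ω, ((c:ℝ)⁻¹ * ∑ s ∈ Finset.Icc 1 c, f s ω)^2
      = ((c:ℝ)^2)⁻¹ * ∑ s ∈ Finset.Icc 1 c, ∑ t ∈ Finset.Icc 1 c, f s ω * f t ω := by
    intro ω
    rw [mul_pow, inv_pow, sq (∑ s ∈ Finset.Icc 1 c, f s ω), Finset.sum_mul_sum]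
  have hsumint : Integrable
      (fun ω => ∑ s ∈ Finset.Icc 1 c, ∑ t ∈ Finset.Icc 1 c, f s ω * f t ω) P :=
    integrable_finset_sum _ (fun s _ => integrable_finset_sum _ (fun t _ => hprod s t))
  have hMint : Integrable (fun ω => ((c:ℝ)⁻¹ * ∑ s ∈ Finset.Icc 1 c, f s ω)^2) P := by
    have := hsumint.const_mul ((c:ℝ)^2)⁻¹
    refine this.congr (Filter.Eventually.of_forall fun ω => ?_)
    exact (hexp ω).symm
  refine ⟨hMint, ?_⟩
  have hI : ∫ ω, ((c:ℝ)⁻¹ * ∑ s ∈ Finset.Icc 1 c, f s ω)^2 ∂P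
      = ((c:ℝ)^2)⁻¹ * ∑ s ∈ Finset.Icc 1 c, ∑ t ∈ Finset.Icc 1 c,
          ∫ ω, f s ω * f t ω ∂P := by
    simp_rw [hexp]
    rw [MeasureTheory.integral_const_mul, integral_finset_sum _ (fun s _ =>
      integrable_finset_sum _ (fun t _ => hprod s t))]
    congr 1
    exact Finset.sum_congr rfl (fun s _ => integral_finset_sum _ (fun t _ => hprod s t))
  have hdiag : ∀ s ∈ Finset.Icc 1 c, ∑ t ∈ Finset.Icc 1 c, ∫ ω, f s ω * f t ω ∂P
      = ∫ ω, (f s ω)^2 ∂P := by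
    intro s hs
    rw [Finset.sum_eq_single_of_mem s hs]
    · simp [sq]
    · intro t _ hts
      have h0 := (hindep s t (fun h => hts h.symm)).integral_mul_eq_mul_integral
        (hint s).aestronglyMeasurable (hint t).aestronglyMeasurable
      simpa [Pi.mul_apply, hmean t] using h0
  have hsum_le : ∑ s ∈ Finset.Icc 1 c, ∑ t ∈ Finset.Icc 1 c, ∫ ω, f s ω * f t ω ∂P
      ≤ (c:ℝ) * B := by
    calc ∑ s ∈ Finset.Icc 1 c, ∑ t ∈ Finset.Icc 1 c, ∫ ω, f s ω * f t ω ∂P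
        = ∑ s ∈ Finset.Icc 1 c, ∫ ω, (f s ω)^2 ∂P := Finset.sum_congr rfl hdiag
      _ ≤ ∑ s ∈ Finset.Icc 1 c, B := Finset.sum_le_sum (fun s _ => hsqbd s)
      _ = (c:ℝ) * B := by rw [Finset.sum_const, Nat.card_Icc]; simp [nsmul_eq_mul]
  rw [hI]
  calc ((c:ℝ)^2)⁻¹ * ∑ s ∈ Finset.Icc 1 c, ∑ t ∈ Finset.Icc 1 c, ∫ ω, f s ω * f t ω ∂P
      ≤ ((c:ℝ)^2)⁻¹ * ((c:ℝ) * B) := by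
        apply mul_le_mul_of_nonneg_left hsum_le (by positivity)
    _ = B / c := by field_simp

/-- **Regret under the greedy decision** (Lemma 7 of Rusmevichientong–Tsitsiklis): under
the SBAR(J) condition there is a constant `h₂` depending only on `σ₀, ū, λ₀, J` such that
the greedy arm `G(c)` based on the OLS estimate `Ẑ(c)` satisfies
`E[max_{u ∈ U_r} z′(u − G(c))] ≤ h₂ r / (c ‖z‖)`. -/
theorem stmt10 (σ₀ ubar lam0 J : ℝ) (hσ₀ : 0 < σ₀) (hubar : 0 < ubar) (hlam0 : 0 < lam0)
    (hJ : 0 < J) :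
    ∃ h₂ : ℝ, 0 < h₂ ∧
      ∀ (r : ℕ), 2 ≤ r →
      ∀ (K : Set (EuclideanSpace ℝ (Fin r))), IsCompact K →
        (∀ u ∈ K, ‖u‖ ≤ ubar) →
      ∀ (b : Fin r → EuclideanSpace ℝ (Fin r)), LinearIndependent ℝ b →
        (∀ k, b k ∈ K) →
        (∀ v : EuclideanSpace ℝ (Fin r), lam0 * ‖v‖ ^ 2 ≤ ∑ k, ⟪b k, v⟫ ^ 2) →
      -- SBAR(J): unique best arm response, Lipschitz on unit vectors
      ∀ (ustar : EuclideanSpace ℝ (Fin r) → EuclideanSpace ℝ (Fin r)),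
        (∀ z, z ≠ 0 → ustar z ∈ K) →
        (∀ z, z ≠ 0 → ∀ v ∈ K, ⟪v, z⟫ ≤ ⟪ustar z, z⟫) →
        (∀ z, z ≠ 0 → ∀ v ∈ K, (∀ u ∈ K, ⟪u, z⟫ ≤ ⟪v, z⟫) → v = ustar z) →
        (∀ z y : EuclideanSpace ℝ (Fin r), ‖z‖ = 1 → ‖y‖ = 1 →
          ‖ustar z - ustar y‖ ≤ J * ‖z - y‖) →
      ∀ (Ω : Type) (mΩ : MeasurableSpace Ω) (P : Measure Ω), IsProbabilityMeasure P →
      ∀ (W : Fin r → ℕ → Ω → ℝ), (∀ k s, Measurable (W k s)) →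
        iIndepFun (fun p : Fin r × ℕ => W p.1 p.2) P →
        (∀ k s, Integrable (W k s) P) →
        (∀ k s, ∫ ω, W k s ω ∂P = 0) →
        (∀ k s (x : ℝ), Integrable (fun ω => Real.exp (x * W k s ω)) P) →
        (∀ k s (x : ℝ), ∫ ω, Real.exp (x * W k s ω) ∂P ≤ Real.exp (x ^ 2 * σ₀ ^ 2 / 2)) →
      ∀ (z : EuclideanSpace ℝ (Fin r)), z ≠ 0 →
      ∀ (Zhat : ℕ → Ω → EuclideanSpace ℝ (Fin r)),
        (∀ c ω, ∑ k, ⟪b k, Zhat c ω - z⟫ • b k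
            = (c : ℝ)⁻¹ • ∑ s ∈ Finset.Icc 1 c, ∑ k, W k s ω • b k) →
      ∀ (G : ℕ → Ω → EuclideanSpace ℝ (Fin r)), (∀ c, Measurable (G c)) →
        (∀ c ω, G c ω ∈ K) →
        (∀ c ω, ∀ v ∈ K, ⟪v, Zhat c ω⟫ ≤ ⟪G c ω, Zhat c ω⟫) →
      ∀ c : ℕ, 1 ≤ c →
        ∫ ω, (sSup ((fun u => ⟪u, z⟫) '' K) - ⟪G c ω, z⟫) ∂P ≤ h₂ * r / (c * ‖z‖) := by
  
  classical
  refine ⟨(2*J + 2*ubar) * (8 * Real.exp (σ₀^2/2)) / lam0, by positivity, ?_⟩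
  intro r hr K hK hKb b hb hbK hlam ustar hmem hopt huniq hlip Ω mΩ P hP W hWm hWindep
    hWint hWmean hWexpint hWmgf z hz Zhat hZhat G hGm hGK hGopt c hc
  haveI := hP
  have hz0 : (0:ℝ) < ‖z‖ := norm_pos_iff.mpr hz
  have hc0 : (0:ℝ) < (c:ℝ) := by exact_mod_cast hc
  set C : ℝ := 2*J + 2*ubar with hC
  set B : ℝ := 8 * Real.exp (σ₀^2/2) with hBdef
  have hCpos : 0 < C := by positivity
  have hBpos : 0 < B := by positivity
  -- the estimation errors
  set M : Fin r → Ω → ℝ := fun k ω => (c:ℝ)⁻¹ * ∑ s ∈ Finset.Icc 1 c, W k s ω with hM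
  -- coefficient identity
  have hcoef : ∀ ω k, ⟪b k, Zhat c ω - z⟫ = M k ω := by
    intro ω k
    have h := hZhat c ω
    have hRHS : (c:ℝ)⁻¹ • ∑ s ∈ Finset.Icc 1 c, ∑ k, W k s ω • b k
        = ∑ k, M k ω • b k := by
      rw [Finset.smul_sum]
      simp_rw [Finset.smul_sum, smul_smul]
      rw [Finset.sum_comm]
      refine Finset.sum_congr rfl fun k _ => ?_
      rw [← Finset.sum_smul, ← Finset.mul_sum]
    have hzero : ∑ k, (⟪b k, Zhat c ω - z⟫ - M k ω) • b k = 0 := by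
      simp_rw [sub_smul, Finset.sum_sub_distrib, h, hRHS, sub_self]
    have := Fintype.linearIndependent_iff.mp hb _ hzero k
    linarith [this]
  -- per-coordinate second-moment bounds
  have hmom : ∀ k s, Integrable (fun ω => (W k s ω)^2) P ∧
      ∫ ω, (W k s ω)^2 ∂P ≤ B :=
    fun k s => moment_bound P σ₀ (W k s) (hWm k s) (hWexpint k s) (hWmgf k s)
  have hMk : ∀ k : Fin r, Integrable (fun ω => (M k ω)^2) P ∧
      ∫ ω, (M k ω)^2 ∂P ≤ B / c := by
    intro k
    refine M_bound P B hBpos.le c hc (fun s => W k s) ?_ (fun s => hWint k s)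
      (fun s => hWmean k s) (fun s => (hmom k s).1) (fun s => (hmom k s).2)
    intro s t hst
    exact hWindep.indepFun (show ((k,s) : Fin r × ℕ) ≠ (k,t) by simp [hst])
  -- the sum of squares
  set g : Ω → ℝ := fun ω => ∑ k, (M k ω)^2 with hg
  have hgint : Integrable g P := integrable_finset_sum _ (fun k _ => (hMk k).1)
  have hgI : ∫ ω, g ω ∂P ≤ r * B / c := by
    rw [hg]
    rw [integral_finset_sum _ (fun k _ => (hMk k).1)]
    calc ∑ k : Fin r, ∫ ω, (M k ω)^2 ∂P ≤ ∑ _k : Fin r, B / c :=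
          Finset.sum_le_sum (fun k _ => (hMk k).2)
      _ = r * (B / c) := by rw [Finset.sum_const, Finset.card_univ, Fintype.card_fin,
            nsmul_eq_mul]
      _ = r * B / c := by ring
  -- value of the sup
  have hKne : K.Nonempty := ⟨b ⟨0, by omega⟩, hbK _⟩
  have hbdd : BddAbove ((fun u => ⟪u, z⟫) '' K) := by
    refine ⟨ubar * ‖z‖, ?_⟩
    rintro _ ⟨u, hu, rfl⟩
    exact (real_inner_le_norm u z).trans
      (mul_le_mul_of_nonneg_right (hKb u hu) (norm_nonneg z))
  have hS : sSup ((fun u => ⟪u, z⟫) '' K) = ⟪ustar z, z⟫ := by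
    refine le_antisymm (csSup_le (hKne.image _) ?_) (le_csSup hbdd ⟨ustar z, hmem z hz, rfl⟩)
    rintro _ ⟨u, hu, rfl⟩
    exact hopt z hz u hu
  -- pointwise bound
  have hpt : ∀ ω, sSup ((fun u => ⟪u, z⟫) '' K) - ⟪G c ω, z⟫
      ≤ (C / (lam0 * ‖z‖)) * g ω := by
    intro ω
    rw [hS]
    have h1 : ⟪ustar z, z⟫ - ⟪G c ω, z⟫ ≤ C * ‖Zhat c ω - z‖^2 / ‖z‖ :=
      gap_bound K ubar J hubar.le hJ.le hKb ustar hmem hopt huniq hlip z (Zhat c ω)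
        (G c ω) hz (hGK c ω) (hGopt c ω)
    have h2 : lam0 * ‖Zhat c ω - z‖^2 ≤ g ω := by
      have := hlam (Zhat c ω - z)
      calc lam0 * ‖Zhat c ω - z‖^2 ≤ ∑ k, ⟪b k, Zhat c ω - z⟫^2 := this
        _ = g ω := Finset.sum_congr rfl (fun k _ => by rw [hcoef ω k])
    have h3 : ‖Zhat c ω - z‖^2 ≤ g ω / lam0 := by
      rw [le_div_iff₀ hlam0]; linarith
    calc ⟪ustar z, z⟫ - ⟪G c ω, z⟫ ≤ C * ‖Zhat c ω - z‖^2 / ‖z‖ := h1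
      _ ≤ C * (g ω / lam0) / ‖z‖ := by
          gcongr
      _ = (C / (lam0 * ‖z‖)) * g ω := by field_simp
  -- integrability of the integrand
  have hGmeas : Measurable (fun ω => ⟪G c ω, z⟫) :=
    ((continuous_id.inner continuous_const).measurable).comp (hGm c)
  have hFint : Integrable
      (fun ω => sSup ((fun u => ⟪u, z⟫) '' K) - ⟪G c ω, z⟫) P := by
    refine (integrable_const (|sSup ((fun u => ⟪u, z⟫) '' K)| + ubar * ‖z‖)).mono'
      ((measurable_const.sub hGmeas).aestronglyMeasurable)
      (Filter.Eventually.of_forall fun ω => ?_)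
    rw [Real.norm_eq_abs]
    have h1 : |⟪G c ω, z⟫| ≤ ubar * ‖z‖ :=
      (abs_real_inner_le_norm _ _).trans
        (mul_le_mul_of_nonneg_right (hKb _ (hGK c ω)) (norm_nonneg z))
    calc |sSup ((fun u => ⟪u, z⟫) '' K) - ⟪G c ω, z⟫|
        ≤ |sSup ((fun u => ⟪u, z⟫) '' K)| + |⟪G c ω, z⟫| := abs_sub _ _
      _ ≤ |sSup ((fun u => ⟪u, z⟫) '' K)| + ubar * ‖z‖ := by linarith
  -- conclude
  have hmain : ∫ ω, (sSup ((fun u => ⟪u, z⟫) '' K) - ⟪G c ω, z⟫) ∂P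
      ≤ (C / (lam0 * ‖z‖)) * (r * B / c) := by
    calc ∫ ω, (sSup ((fun u => ⟪u, z⟫) '' K) - ⟪G c ω, z⟫) ∂P
        ≤ ∫ ω, (C / (lam0 * ‖z‖)) * g ω ∂P :=
          integral_mono hFint (hgint.const_mul _) hpt
      _ = (C / (lam0 * ‖z‖)) * ∫ ω, g ω ∂P := MeasureTheory.integral_const_mul _ _
      _ ≤ (C / (lam0 * ‖z‖)) * (r * B / c) := by
          apply mul_le_mul_of_nonneg_left hgI (by positivity)
  refine hmain.trans (le_of_eq ?_)
  rw [hC, hBdef]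
  field_simp
end

section
/- Let r ≥ 2 and let U_1, …, U_{t+1} ∈ ℝ^r (t ≥ r) be vectors with ‖U_s‖ ≤ ū for all s and λ_min(∑_{s=1}^r U_s U_s′) ≥ λ₀ > 0. For r ≤ s ≤ t let C_s = (∑_{q=1}^s U_q U_q′)^{-1} and write ‖v‖²_{C_s} = v′C_s v. Then: (i) 0 ≤ ‖U_{t+1}‖²_{C_t} ≤ ū²/λ₀, and (ii) ‖U_{t+1}‖²_{C_t} ≤ ((ū²/λ₀)·(t+1))^r / ∏_{s=r}^{t−1} (1 + ‖U_{s+1}‖²_{C_s}). -/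
open Matrix

namespace Stmt17Aux
set_option linter.unusedSectionVars false
variable {n : Type*} [Fintype n] [DecidableEq n]

lemma smul_of_vecMulVec (u v : n → ℝ) : (vecMulVec u u) *ᵥ v = (u ⬝ᵥ v) • u := by
  funext i
  simp [vecMulVec, mulVec, dotProduct, Finset.mul_sum, mul_assoc, mul_comm, mul_left_comm]

lemma quad_vecMulVec (u v : n → ℝ) : v ⬝ᵥ (vecMulVec u u) *ᵥ v = (u ⬝ᵥ v) ^ 2 := by
  rw [smul_of_vecMulVec, dotProduct_smul, smul_eq_mul, dotProduct_comm, sq]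

lemma quad_sum {ι : Type*} (s : Finset ι) (W : ι → n → ℝ) (v : n → ℝ) :
    v ⬝ᵥ (∑ q ∈ s, vecMulVec (W q) (W q)) *ᵥ v = ∑ q ∈ s, (W q ⬝ᵥ v) ^ 2 := by
  induction s using Finset.cons_induction with
  | empty => simp
  | cons a s ha ih => rw [Finset.sum_cons, Finset.sum_cons, Matrix.add_mulVec,
      dotProduct_add, ih, quad_vecMulVec]

lemma isHermitian_sum (s : Finset ℕ) (W : ℕ → n → ℝ) :
    (∑ q ∈ s, vecMulVec (W q) (W q)).IsHermitian := by
  unfold Matrix.IsHermitian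
  ext i j
  simp [conjTranspose_apply, vecMulVec_apply, Matrix.sum_apply, mul_comm]

lemma dot_sq_le (u v : n → ℝ) : (u ⬝ᵥ v) ^ 2 ≤ (∑ i, u i ^ 2) * (∑ i, v i ^ 2) := by
  simpa [dotProduct] using Finset.sum_mul_sq_le_sq_mul_sq Finset.univ u v

lemma sum_sq_pos {x : n → ℝ} (hx : x ≠ 0) : 0 < ∑ i, x i ^ 2 := by
  obtain ⟨i, hi⟩ := Function.ne_iff.mp hx
  have hi' : x i ≠ 0 := by simpa using hi
  exact Finset.sum_pos' (fun j _ => sq_nonneg _)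
    ⟨i, Finset.mem_univ i, by positivity⟩

lemma posDef_of_quad {M : Matrix n n ℝ} (hH : M.IsHermitian) {lam : ℝ} (hlam : 0 < lam)
    (hquad : ∀ v : n → ℝ, lam * ∑ i, v i ^ 2 ≤ v ⬝ᵥ M *ᵥ v) : M.PosDef := by
  refine .of_dotProduct_mulVec_pos hH fun x hx => ?_
  have hs : star x = x := by funext i; simp
  rw [hs]
  exact (mul_pos hlam (sum_sq_pos hx)).trans_le (hquad x)

lemma inv_quad_bounds {M : Matrix n n ℝ} (hM : M.PosDef) {lam : ℝ} (hlam : 0 < lam)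
    (hquad : ∀ v : n → ℝ, lam * ∑ i, v i ^ 2 ≤ v ⬝ᵥ M *ᵥ v) (x : n → ℝ) :
    0 ≤ x ⬝ᵥ M⁻¹ *ᵥ x ∧ x ⬝ᵥ M⁻¹ *ᵥ x ≤ (∑ i, x i ^ 2) / lam := by
  have hnn : 0 ≤ x ⬝ᵥ M⁻¹ *ᵥ x := by
    have := hM.posSemidef.inv.dotProduct_mulVec_nonneg x
    simpa [show star x = x from funext fun i => by simp] using this
  refine ⟨hnn, ?_⟩
  set y := M⁻¹ *ᵥ x with hy
  have hxy : M *ᵥ y = x := by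
    rw [hy, Matrix.mulVec_mulVec,
      Matrix.mul_nonsing_inv _ (isUnit_iff_ne_zero.mpr hM.det_pos.ne'), Matrix.one_mulVec]
  have hq : lam * ∑ i, y i ^ 2 ≤ x ⬝ᵥ y := by
    have := hquad y
    rwa [hxy, dotProduct_comm] at this
  have hcs : (x ⬝ᵥ y) ^ 2 ≤ (∑ i, x i ^ 2) * (∑ i, y i ^ 2) := dot_sq_le x y
  have hXnn : (0:ℝ) ≤ ∑ i, x i ^ 2 := Finset.sum_nonneg fun i _ => sq_nonneg _
  rw [le_div_iff₀ hlam]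
  rcases eq_or_lt_of_le hnn with h0 | hpos
  · rw [← h0]; simpa using hXnn
  · nlinarith [mul_le_mul_of_nonneg_left hcs hlam.le,
      mul_le_mul_of_nonneg_left hq hXnn, hpos]

lemma det_step {B : Matrix n n ℝ} (hB : IsUnit B.det) (u : n → ℝ) :
    (B + vecMulVec u u).det = B.det * (1 + u ⬝ᵥ B⁻¹ *ᵥ u) := by
  have h1 : B + vecMulVec u u = B * (1 + B⁻¹ * (replicateCol (Fin 1) u * replicateRow (Fin 1) u)) := by
    rw [Matrix.mul_add, Matrix.mul_one, Matrix.mul_nonsing_inv_cancel_left _ _ hB,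
      vecMulVec_eq (Fin 1)]
    rfl
  have h2 : ((1 + replicateRow (Fin 1) u * (B⁻¹ * replicateCol (Fin 1) u) : Matrix (Fin 1) (Fin 1) ℝ)) 0 0
      = 1 + u ⬝ᵥ B⁻¹ *ᵥ u := by
    simp [Matrix.add_apply, Matrix.one_apply_eq, Matrix.mul_apply, Matrix.replicateRow_apply,
      Matrix.replicateCol_apply, mulVec, dotProduct, Finset.mul_sum, mul_assoc]
  rw [h1, Matrix.det_mul, ← Matrix.mul_assoc, Matrix.det_one_add_mul_comm,
    Matrix.det_fin_one, h2]

lemma det_telescope (U : ℕ → n → ℝ) (r : ℕ) (hr : 1 ≤ r)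
    (hpd : ∀ s, r ≤ s → (∑ q ∈ Finset.Icc 1 s, vecMulVec (U q) (U q)).PosDef) :
    ∀ m, r ≤ m → det (∑ q ∈ Finset.Icc 1 m, vecMulVec (U q) (U q))
      = det (∑ q ∈ Finset.Icc 1 r, vecMulVec (U q) (U q)) *
        ∏ s ∈ Finset.Icc r (m - 1),
          (1 + U (s + 1) ⬝ᵥ (∑ q ∈ Finset.Icc 1 s, vecMulVec (U q) (U q))⁻¹ *ᵥ U (s + 1)) := by
  intro m hm
  induction m, hm using Nat.le_induction with
  | base => rw [show Finset.Icc r (r - 1) = ∅ from Finset.Icc_eq_empty (by omega),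
      Finset.prod_empty, mul_one]
  | succ m hm ih =>
    have hBm : (∑ q ∈ Finset.Icc 1 (m + 1), vecMulVec (U q) (U q))
        = (∑ q ∈ Finset.Icc 1 m, vecMulVec (U q) (U q)) + vecMulVec (U (m + 1)) (U (m + 1)) :=
      Finset.sum_Icc_succ_top (by omega) _
    rw [hBm, det_step (isUnit_iff_ne_zero.mpr (hpd m hm).det_pos.ne') (U (m + 1)), ih]
    have hm1 : m - 1 + 1 = m := by omega
    rw [show m + 1 - 1 = m from rfl, ← hm1, Finset.prod_Icc_succ_top (by omega), hm1, mul_assoc]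

lemma inner_eq_dot (x y : EuclideanSpace ℝ n) : (inner ℝ x y : ℝ) = (x : n → ℝ) ⬝ᵥ (y : n → ℝ) := by
  simp [PiLp.inner_apply, dotProduct, RCLike.inner_apply, conj_trivial, mul_comm]

lemma eigenvalue_quad {M : Matrix n n ℝ} (hH : M.IsHermitian) (i : n) :
    hH.eigenvalues i = (hH.eigenvectorBasis i : n → ℝ) ⬝ᵥ M *ᵥ (hH.eigenvectorBasis i : n → ℝ) := by
  simpa using hH.eigenvalues_eq i

lemma eigenvector_norm {M : Matrix n n ℝ} (hH : M.IsHermitian) (i : n) :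
    ∑ j, (hH.eigenvectorBasis i : n → ℝ) j ^ 2 = 1 := by
  have h := hH.eigenvectorBasis.orthonormal.1 i
  have h2 : (inner ℝ (hH.eigenvectorBasis i) (hH.eigenvectorBasis i) : ℝ) = 1 := by
    rw [real_inner_self_eq_norm_sq, h]; norm_num
  rw [inner_eq_dot] at h2
  simpa [dotProduct, sq] using h2

lemma rayleigh_min {M : Matrix n n ℝ} (hH : M.IsHermitian) {c : ℝ}
    (hc : ∀ i, c ≤ hH.eigenvalues i) (x : n → ℝ) :
    c * ∑ i, x i ^ 2 ≤ x ⬝ᵥ M *ᵥ x := by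
  classical
  set b := hH.eigenvectorBasis with hb
  have hsymm : Mᵀ = M := by
    ext i j
    have h2 := congrFun (congrFun hH i) j
    simpa [Matrix.conjTranspose_apply] using h2
  have hbMx : ∀ i (y : n → ℝ), (b i : n → ℝ) ⬝ᵥ (M *ᵥ y)
      = hH.eigenvalues i * ((b i : n → ℝ) ⬝ᵥ y) := by
    intro i y
    have hm : M *ᵥ (b i : n → ℝ) = hH.eigenvalues i • (b i : n → ℝ) :=
      hH.mulVec_eigenvectorBasis i
    rw [Matrix.dotProduct_mulVec, ← Matrix.mulVec_transpose, hsymm, hm,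
      smul_dotProduct]
    simp
  have hexp := b.sum_inner_mul_inner (WithLp.toLp 2 x : EuclideanSpace ℝ n)
    (WithLp.toLp 2 (M *ᵥ x : n → ℝ) : EuclideanSpace ℝ n)
  have hexp2 := b.sum_inner_mul_inner (WithLp.toLp 2 x : EuclideanSpace ℝ n) (WithLp.toLp 2 x : EuclideanSpace ℝ n)
  simp only [inner_eq_dot, WithLp.ofLp_toLp] at hexp hexp2
  have hxx : (x : n → ℝ) ⬝ᵥ x = ∑ i, x i ^ 2 := by simp [dotProduct, sq]
  have hMx : x ⬝ᵥ M *ᵥ x = ∑ i, hH.eigenvalues i * (x ⬝ᵥ (b i : n → ℝ)) ^ 2 := by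
    rw [← hexp]
    refine Finset.sum_congr rfl fun i _ => ?_
    rw [hbMx i x, dotProduct_comm (b i : n → ℝ) x, sq]
    ring
  have hnorm : ∑ i, (x ⬝ᵥ (b i : n → ℝ)) ^ 2 = ∑ i, x i ^ 2 := by
    rw [← hxx, ← hexp2]
    refine Finset.sum_congr rfl fun i _ => ?_
    rw [dotProduct_comm (b i : n → ℝ) x, sq]
  rw [hMx, ← hnorm, Finset.mul_sum]
  exact Finset.sum_le_sum fun i _ =>
    mul_le_mul_of_nonneg_right (hc i) (sq_nonneg _)

end Stmt17Aux

open Stmt17Aux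

/-- **Large past regrets imply small current regret** (Lemma 9 of
Rusmevichientong–Tsitsiklis): for vectors `U_1, …, U_{t+1}` of norm at most `ū` whose
first `r` outer products sum to a matrix with smallest eigenvalue at least `λ₀`, writing
`C_s = (∑_{q=1}^s U_q U_q′)⁻¹` and `‖v‖²_{C_s} = v′C_s v`, one has
`0 ≤ ‖U_{t+1}‖²_{C_t} ≤ ū²/λ₀` and
`‖U_{t+1}‖²_{C_t} ≤ ((ū²/λ₀)(t+1))^r / ∏_{s=r}^{t−1}(1 + ‖U_{s+1}‖²_{C_s})`. -/
theorem stmt17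
    (r : ℕ) (hr : 2 ≤ r) (t : ℕ) (ht : r ≤ t)
    (ubar lam0 : ℝ) (hubar : 0 < ubar) (hlam0 : 0 < lam0)
    (U : ℕ → (Fin r → ℝ))
    (hUbound : ∀ s ∈ Finset.Icc 1 (t + 1), ∑ i, U s i ^ 2 ≤ ubar ^ 2)
    (hlammin : ∀ v : Fin r → ℝ,
      lam0 * ∑ i, v i ^ 2 ≤ v ⬝ᵥ (∑ s ∈ Finset.Icc 1 r, vecMulVec (U s) (U s)) *ᵥ v) :
    (0 ≤ U (t + 1) ⬝ᵥ (∑ q ∈ Finset.Icc 1 t, vecMulVec (U q) (U q))⁻¹ *ᵥ U (t + 1) ∧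
      U (t + 1) ⬝ᵥ (∑ q ∈ Finset.Icc 1 t, vecMulVec (U q) (U q))⁻¹ *ᵥ U (t + 1)
        ≤ ubar ^ 2 / lam0) ∧
    U (t + 1) ⬝ᵥ (∑ q ∈ Finset.Icc 1 t, vecMulVec (U q) (U q))⁻¹ *ᵥ U (t + 1)
      ≤ (ubar ^ 2 / lam0 * (t + 1)) ^ r /
          ∏ s ∈ Finset.Icc r (t - 1),
            (1 + U (s + 1) ⬝ᵥ (∑ q ∈ Finset.Icc 1 s, vecMulVec (U q) (U q))⁻¹ *ᵥ U (s + 1)) := by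
  classical
  -- abbreviations
  set B : ℕ → Matrix (Fin r) (Fin r) ℝ :=
    fun s => ∑ q ∈ Finset.Icc 1 s, vecMulVec (U q) (U q) with hBdef
  -- lower quadratic bound for s ≥ r
  have hlow : ∀ s, r ≤ s → ∀ v : Fin r → ℝ, lam0 * ∑ i, v i ^ 2 ≤ v ⬝ᵥ (B s) *ᵥ v := by
    intro s hs v
    have h1 := hlammin v
    rw [quad_sum] at h1
    calc lam0 * ∑ i, v i ^ 2 ≤ ∑ q ∈ Finset.Icc 1 r, (U q ⬝ᵥ v) ^ 2 := h1
      _ ≤ ∑ q ∈ Finset.Icc 1 s, (U q ⬝ᵥ v) ^ 2 :=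
        Finset.sum_le_sum_of_subset_of_nonneg
          (Finset.Icc_subset_Icc_right hs) (fun q _ _ => sq_nonneg _)
      _ = v ⬝ᵥ (B s) *ᵥ v := (quad_sum _ _ _).symm
  have hherm : ∀ s : ℕ, (B s).IsHermitian := fun s => isHermitian_sum _ _
  have hpd : ∀ s, r ≤ s → (B s).PosDef :=
    fun s hs => posDef_of_quad (hherm s) hlam0 (hlow s hs)
  -- notation for the main quantity
  set x : Fin r → ℝ := U (t + 1) with hxdef
  have hX : ∑ i, x i ^ 2 ≤ ubar ^ 2 :=
    hUbound (t + 1) (Finset.mem_Icc.mpr ⟨by omega, le_rfl⟩)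
  have hXnn : (0:ℝ) ≤ ∑ i, x i ^ 2 := Finset.sum_nonneg fun i _ => sq_nonneg _
  have hpdt := hpd t ht
  have hinv := inv_quad_bounds hpdt hlam0 (hlow t ht) x
  have part1 : 0 ≤ x ⬝ᵥ (B t)⁻¹ *ᵥ x ∧ x ⬝ᵥ (B t)⁻¹ *ᵥ x ≤ ubar ^ 2 / lam0 := by
    refine ⟨hinv.1, hinv.2.trans ?_⟩
    gcongr
  refine ⟨part1, ?_⟩
  -- eigenvalue analysis of B t
  have hHt : (B t).IsHermitian := hherm t
  set μ : Fin r → ℝ := hHt.eigenvalues with hμdef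
  have hne : (Finset.univ : Finset (Fin r)).Nonempty :=
    ⟨⟨0, by omega⟩, Finset.mem_univ _⟩
  obtain ⟨i₀, _, hmin⟩ := Finset.exists_min_image Finset.univ μ hne
  have hmin' : ∀ i, μ i₀ ≤ μ i := fun i => hmin i (Finset.mem_univ i)
  have hμlow : ∀ i, lam0 ≤ μ i := by
    intro i
    have h1 := hlow t ht (hHt.eigenvectorBasis i : Fin r → ℝ)
    rw [eigenvector_norm hHt i, mul_one] at h1
    rw [hμdef]
    rw [eigenvalue_quad hHt i]
    exact h1
  set T : ℝ := ubar ^ 2 * ((t : ℝ) + 1) with hTdef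
  have hTub : ubar ^ 2 ≤ T := by
    rw [hTdef]
    nlinarith [sq_nonneg ubar, Nat.cast_nonneg (α := ℝ) t]
  have hTpos : 0 < T := by positivity
  have hμhigh : ∀ i, μ i ≤ T := by
    intro i
    rw [hμdef, eigenvalue_quad hHt i, quad_sum]
    calc ∑ q ∈ Finset.Icc 1 t, (U q ⬝ᵥ (hHt.eigenvectorBasis i : Fin r → ℝ)) ^ 2
        ≤ ∑ q ∈ Finset.Icc 1 t, ubar ^ 2 := by
          refine Finset.sum_le_sum fun q hq => ?_
          have hq' : ∑ j, U q j ^ 2 ≤ ubar ^ 2 := by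
            refine hUbound q ?_
            simp only [Finset.mem_Icc] at hq ⊢
            omega
          calc (U q ⬝ᵥ (hHt.eigenvectorBasis i : Fin r → ℝ)) ^ 2
              ≤ (∑ j, U q j ^ 2) * ∑ j, (hHt.eigenvectorBasis i : Fin r → ℝ) j ^ 2 :=
                dot_sq_le _ _
            _ = ∑ j, U q j ^ 2 := by rw [eigenvector_norm hHt i, mul_one]
            _ ≤ ubar ^ 2 := hq'
      _ = (t : ℝ) * ubar ^ 2 := by
          rw [Finset.sum_const, Nat.card_Icc, nsmul_eq_mul]
          norm_num
      _ ≤ T := by rw [hTdef]; nlinarith [sq_nonneg ubar]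
  have hμ0pos : 0 < μ i₀ := hlam0.trans_le (hμlow i₀)
  -- determinant bounds
  have hdetprod : det (B t) = ∏ i, μ i := by
    simpa using hHt.det_eq_prod_eigenvalues
  have hdethigh : det (B t) ≤ μ i₀ * T ^ (r - 1) := by
    rw [hdetprod, ← Finset.mul_prod_erase Finset.univ μ (Finset.mem_univ i₀)]
    refine mul_le_mul_of_nonneg_left ?_ hμ0pos.le
    calc ∏ i ∈ Finset.univ.erase i₀, μ i ≤ ∏ i ∈ Finset.univ.erase i₀, T :=
          Finset.prod_le_prod (fun i _ => (hlam0.trans_le (hμlow i)).le)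
            (fun i _ => hμhigh i)
      _ = T ^ (r - 1) := by
          rw [Finset.prod_const, Finset.card_erase_of_mem (Finset.mem_univ i₀)]
          simp
  -- determinant lower bound for B r
  have hHr : (B r).IsHermitian := hherm r
  have hdetlowr : lam0 ^ r ≤ det (B r) := by
    have hν : ∀ i, lam0 ≤ hHr.eigenvalues i := by
      intro i
      have h1 := hlow r le_rfl (hHr.eigenvectorBasis i : Fin r → ℝ)
      rw [eigenvector_norm hHr i, mul_one] at h1
      rw [eigenvalue_quad hHr i]
      exact h1
    have : det (B r) = ∏ i, hHr.eigenvalues i := by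
      simpa using hHr.det_eq_prod_eigenvalues
    rw [this]
    calc lam0 ^ r = ∏ _i : Fin r, lam0 := by rw [Finset.prod_const]; simp
      _ ≤ ∏ i, hHr.eigenvalues i :=
        Finset.prod_le_prod (fun i _ => hlam0.le) (fun i _ => hν i)
  have hdetrpos : 0 < det (B r) := (hpd r le_rfl).det_pos
  have hdettpos : 0 < det (B t) := hpdt.det_pos
  -- the product P
  set P : ℝ := ∏ s ∈ Finset.Icc r (t - 1),
    (1 + U (s + 1) ⬝ᵥ (B s)⁻¹ *ᵥ U (s + 1)) with hPdef
  have hdeteq : det (B t) = det (B r) * P :=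
    det_telescope U r (by omega) hpd t ht
  have hPpos : 0 < P := by
    rw [hPdef]
    refine Finset.prod_pos fun s hs => ?_
    have hrs : r ≤ s := (Finset.mem_Icc.mp hs).1
    have := (inv_quad_bounds (hpd s hrs) hlam0 (hlow s hrs) (U (s + 1))).1
    linarith
  have hPeq : P = det (B t) / det (B r) := by
    rw [eq_div_iff hdetrpos.ne']
    linarith [hdeteq]
  -- quantitative chain
  have hQnn : (0:ℝ) ≤ (ubar ^ 2 / lam0 * ((t : ℝ) + 1)) ^ r := by positivity
  have hQeq : (ubar ^ 2 / lam0 * ((t : ℝ) + 1)) ^ r * lam0 ^ r = T ^ r := by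
    rw [← mul_pow, hTdef]
    congr 1
    field_simp
  have hinv2 := inv_quad_bounds hpdt hμ0pos (rayleigh_min hHt hmin') x
  have ha2 : x ⬝ᵥ (B t)⁻¹ *ᵥ x ≤ ubar ^ 2 / μ i₀ := by
    refine hinv2.2.trans ?_
    gcongr
  have hstep1 : x ⬝ᵥ (B t)⁻¹ *ᵥ x * det (B t) ≤ ubar ^ 2 * T ^ (r - 1) := by
    calc x ⬝ᵥ (B t)⁻¹ *ᵥ x * det (B t) ≤ (ubar ^ 2 / μ i₀) * (μ i₀ * T ^ (r - 1)) :=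
          mul_le_mul ha2 hdethigh hdettpos.le (by positivity)
      _ = ubar ^ 2 * T ^ (r - 1) := by field_simp
  have hTr : ubar ^ 2 * T ^ (r - 1) ≤ T ^ r := by
    have h1 : T ^ r = T ^ (r - 1) * T := by
      rw [← pow_succ]
      congr 1
      omega
    rw [h1]
    calc ubar ^ 2 * T ^ (r - 1) = T ^ (r - 1) * ubar ^ 2 := by ring
      _ ≤ T ^ (r - 1) * T := by
        refine mul_le_mul_of_nonneg_left hTub (by positivity)
  have hfinal : x ⬝ᵥ (B t)⁻¹ *ᵥ x * det (B t)
      ≤ (ubar ^ 2 / lam0 * ((t : ℝ) + 1)) ^ r * det (B r) := by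
    calc x ⬝ᵥ (B t)⁻¹ *ᵥ x * det (B t) ≤ ubar ^ 2 * T ^ (r - 1) := hstep1
      _ ≤ T ^ r := hTr
      _ = (ubar ^ 2 / lam0 * ((t : ℝ) + 1)) ^ r * lam0 ^ r := hQeq.symm
      _ ≤ (ubar ^ 2 / lam0 * ((t : ℝ) + 1)) ^ r * det (B r) :=
        mul_le_mul_of_nonneg_left hdetlowr hQnn
  rw [le_div_iff₀ hPpos, hPeq, ← mul_div_assoc, div_le_iff₀ hdetrpos]
  calc x ⬝ᵥ (B t)⁻¹ *ᵥ x * det (B t)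
      ≤ (ubar ^ 2 / lam0 * ((t : ℝ) + 1)) ^ r * det (B r) := hfinal
end

section
/- Let r ≥ 2, c ≥ 0, t ≥ 1, and set c₀ = max{1, c}. Suppose the real numbers y_1, …, y_t satisfy, for each s = 1, …, t: 0 ≤ y_s ≤ c and y_s ≤ (c·(r+s))^r / ∏_{q=1}^{s−1} (1 + y_q) (with the empty product equal to 1). Then ∑_{s=1}^t y_s ≤ 2 c₀ · ( r log c₀ + (r+1) log(r + t + 1) ). -/
open Real

private lemma nat_aux (r t : ℕ) (hr : 2 ≤ r) (ht : 1 ≤ t) :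
    1 + t * (r + t) ^ r ≤ (r + t + 1) ^ (r + 1) := by
  have h1 : t * (r + t) ^ r ≤ (r + t) * (r + t) ^ r :=
    Nat.mul_le_mul_right _ (Nat.le_add_left t r)
  have h2 : (r + t) * (r + t) ^ r = (r + t) ^ (r + 1) := by ring
  have h3 : (r + t) ^ (r + 1) < (r + t + 1) ^ (r + 1) :=
    Nat.pow_lt_pow_left (Nat.lt_succ_self _) (Nat.succ_ne_zero r)
  omega

/-- **Optimization bound** (Lemma 10 of Rusmevichientong–Tsitsiklis): if
`0 ≤ y_s ≤ c` and `y_s ≤ (c(r+s))^r / ∏_{q<s}(1+y_q)` for `s = 1, …, t`, then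
`∑_{s=1}^t y_s ≤ 2 c₀ (r log c₀ + (r+1) log(r+t+1))` with `c₀ = max{1, c}`. -/
theorem stmt18
    (r : ℕ) (hr : 2 ≤ r) (t : ℕ) (ht : 1 ≤ t)
    (c : ℝ) (hc : 0 ≤ c)
    (y : ℕ → ℝ)
    (hy0 : ∀ s ∈ Finset.Icc 1 t, 0 ≤ y s)
    (hyc : ∀ s ∈ Finset.Icc 1 t, y s ≤ c)
    (hyrec : ∀ s ∈ Finset.Icc 1 t,
      y s ≤ (c * (r + s)) ^ r / ∏ q ∈ Finset.Icc 1 (s - 1), (1 + y q)) :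
    ∑ s ∈ Finset.Icc 1 t, y s
      ≤ 2 * max 1 c * (r * Real.log (max 1 c) + (r + 1) * Real.log (r + t + 1)) := by
  set c0 : ℝ := max 1 c with hc0def
  have hc01 : (1 : ℝ) ≤ c0 := le_max_left _ _
  have hcc0 : c ≤ c0 := le_max_right _ _
  have hc00 : 0 < c0 := lt_of_lt_of_le one_pos hc01
  -- products are at least 1
  have hone : ∀ s, s ≤ t → (1 : ℝ) ≤ ∏ q ∈ Finset.Icc 1 s, (1 + y q) := by
    intro s hs
    calc (1 : ℝ) = ∏ q ∈ Finset.Icc 1 s, (1 : ℝ) := by simp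
    _ ≤ ∏ q ∈ Finset.Icc 1 s, (1 + y q) := by
        apply Finset.prod_le_prod (fun i _ => zero_le_one)
        intro i hi
        have hi' : i ∈ Finset.Icc 1 t := by
          simp only [Finset.mem_Icc] at hi ⊢; omega
        have := hy0 i hi'
        linarith
  -- recursion bound on product
  have hprod : ∀ s, s ≤ t →
      (∏ q ∈ Finset.Icc 1 s, (1 + y q))
        ≤ 1 + ∑ j ∈ Finset.Icc 1 s, (c * (r + j)) ^ r := by
    intro s
    induction s with
    | zero => intro _; simp
    | succ n ih =>
      intro hn
      have hn' : n ≤ t := by omega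
      have hmem : n + 1 ∈ Finset.Icc 1 t := by simp; omega
      have hrec := hyrec (n + 1) hmem
      simp only [Nat.add_sub_cancel] at hrec
      have hPpos : (0 : ℝ) < ∏ q ∈ Finset.Icc 1 n, (1 + y q) :=
        lt_of_lt_of_le one_pos (hone n hn')
      have hmul : y (n + 1) * (∏ q ∈ Finset.Icc 1 n, (1 + y q))
          ≤ (c * (r + (n + 1 : ℕ))) ^ r := by
        rw [← le_div_iff₀ hPpos]
        exact hrec
      rw [Finset.prod_Icc_succ_top (Nat.le_add_left 1 n),
          Finset.sum_Icc_succ_top (Nat.le_add_left 1 n)]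
      have := ih hn'
      nlinarith [hone n hn']
  -- bound the sum of powers
  have hsum : (1 : ℝ) + ∑ j ∈ Finset.Icc 1 t, (c * (r + j)) ^ r
      ≤ c0 ^ r * ((r : ℝ) + t + 1) ^ (r + 1) := by
    have hterm : ∀ j ∈ Finset.Icc 1 t,
        (c * (r + (j : ℕ))) ^ r ≤ c0 ^ r * ((r : ℝ) + t) ^ r := by
      intro j hj
      simp only [Finset.mem_Icc] at hj
      rw [mul_pow]
      apply mul_le_mul (pow_le_pow_left₀ hc hcc0 r) _ (by positivity) (by positivity)
      apply pow_le_pow_left₀ (by positivity)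
      have : (j : ℝ) ≤ t := by exact_mod_cast hj.2
      linarith
    have h1 : ∑ j ∈ Finset.Icc 1 t, (c * (r + j)) ^ r
        ≤ (t : ℝ) * (c0 ^ r * ((r : ℝ) + t) ^ r) := by
      calc ∑ j ∈ Finset.Icc 1 t, (c * (r + j)) ^ r
          ≤ ∑ _j ∈ Finset.Icc 1 t, c0 ^ r * ((r : ℝ) + t) ^ r :=
            Finset.sum_le_sum hterm
        _ = (t : ℝ) * (c0 ^ r * ((r : ℝ) + t) ^ r) := by
            rw [Finset.sum_const, Nat.card_Icc]; simp [nsmul_eq_mul]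
    have h2 : (1 : ℝ) ≤ c0 ^ r := one_le_pow₀ hc01
    have h3 : (1 : ℝ) + (t : ℝ) * ((r : ℝ) + t) ^ r ≤ ((r : ℝ) + t + 1) ^ (r + 1) := by
      have := nat_aux r t hr ht
      have : ((1 + t * (r + t) ^ r : ℕ) : ℝ) ≤ (((r + t + 1) ^ (r + 1) : ℕ) : ℝ) := by
        exact_mod_cast this
      push_cast at this
      linarith
    have h4 : c0 ^ r * ((1 : ℝ) + (t : ℝ) * ((r : ℝ) + t) ^ r)
        ≤ c0 ^ r * ((r : ℝ) + t + 1) ^ (r + 1) :=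
      mul_le_mul_of_nonneg_left h3 (by positivity)
    nlinarith
  -- pointwise: y s ≤ 2 c0 log (1 + y s)
  have hpt : ∀ s ∈ Finset.Icc 1 t, y s ≤ 2 * c0 * Real.log (1 + y s) := by
    intro s hs
    have h0 := hy0 s hs
    have h1 := hyc s hs
    have hpos : (0 : ℝ) < 1 + y s := by linarith
    have hinv : (0 : ℝ) < (1 + y s)⁻¹ := by positivity
    have hlog := Real.log_le_sub_one_of_pos hinv
    rw [Real.log_inv] at hlog
    -- hlog : -log(1+y) ≤ (1+y)⁻¹ - 1
    have hdiv : y s / (1 + y s) ≤ Real.log (1 + y s) := by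
      have he : y s / (1 + y s) = 1 - (1 + y s)⁻¹ := by field_simp; ring
      linarith [hlog, he ▸ le_refl (y s / (1 + y s)), (by linarith [hlog] :
        1 - (1 + y s)⁻¹ ≤ Real.log (1 + y s))]
    have hy' : y s ≤ Real.log (1 + y s) * (1 + y s) := (div_le_iff₀ hpos).mp hdiv
    have hlog0 : 0 ≤ Real.log (1 + y s) := Real.log_nonneg (by linarith)
    have hb : 1 + y s ≤ 2 * c0 := by linarith
    calc y s ≤ Real.log (1 + y s) * (1 + y s) := hy'
      _ ≤ Real.log (1 + y s) * (2 * c0) := mul_le_mul_of_nonneg_left hb hlog0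
      _ = 2 * c0 * Real.log (1 + y s) := by ring
  -- sum of logs equals log of product
  have hne : ∀ q ∈ Finset.Icc 1 t, (1 + y q) ≠ 0 := by
    intro q hq
    have := hy0 q hq
    positivity
  have hlogprod : ∑ s ∈ Finset.Icc 1 t, Real.log (1 + y s)
      = Real.log (∏ q ∈ Finset.Icc 1 t, (1 + y q)) :=
    (Real.log_prod hne).symm
  -- bound log of product
  have hPpos : (0 : ℝ) < ∏ q ∈ Finset.Icc 1 t, (1 + y q) :=
    lt_of_lt_of_le one_pos (hone t le_rfl)
  have hPbound : (∏ q ∈ Finset.Icc 1 t, (1 + y q))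
      ≤ c0 ^ r * ((r : ℝ) + t + 1) ^ (r + 1) :=
    le_trans (hprod t le_rfl) hsum
  have hlogle : Real.log (∏ q ∈ Finset.Icc 1 t, (1 + y q))
      ≤ (r : ℝ) * Real.log c0 + ((r : ℝ) + 1) * Real.log ((r : ℝ) + t + 1) := by
    have h1 : Real.log (∏ q ∈ Finset.Icc 1 t, (1 + y q))
        ≤ Real.log (c0 ^ r * ((r : ℝ) + t + 1) ^ (r + 1)) :=
      Real.log_le_log hPpos hPbound
    rw [Real.log_mul (by positivity) (by positivity), Real.log_pow, Real.log_pow] at h1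
    push_cast at h1
    linarith
  -- assemble
  calc ∑ s ∈ Finset.Icc 1 t, y s
      ≤ ∑ s ∈ Finset.Icc 1 t, 2 * c0 * Real.log (1 + y s) := Finset.sum_le_sum hpt
    _ = 2 * c0 * ∑ s ∈ Finset.Icc 1 t, Real.log (1 + y s) := by rw [Finset.mul_sum]
    _ = 2 * c0 * Real.log (∏ q ∈ Finset.Icc 1 t, (1 + y q)) := by rw [hlogprod]
    _ ≤ 2 * c0 * ((r : ℝ) * Real.log c0 + ((r : ℝ) + 1) * Real.log ((r : ℝ) + t + 1)) := by
        apply mul_le_mul_of_nonneg_left hlogle (by positivity)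
end

section
/- Let Δ be a nonnegative real-valued random variable whose distribution consists of a point mass at 0 together with an absolutely continuous part on (0, ∞) having density q satisfying q(x) ≤ M₀ for all x > 0. Then for every T ≥ 2, E[ min( (log T)/Δ , T·Δ ) ] ≤ (M₀ + 1) log T + M₀ (log T)², where min((log T)/Δ, T·Δ) is interpreted as 0 on the event {Δ = 0}. -/
open MeasureTheory Real
open scoped ENNReal

/-- **Risk integral bound for finitely many arms** (from the proof of Theorem 4 of
Rusmevichientong–Tsitsiklis): if the law of the nonnegative random variable `Δ` is a
point mass at `0` plus a part with density `q ≤ M₀` on `(0,∞)`, then for `T ≥ 2`,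
`E[min((log T)/Δ, T·Δ)] ≤ (M₀+1) log T + M₀ (log T)²` (the integrand being `0` on
`{Δ = 0}`, which is Lean's convention since `log T / 0 = 0`). -/
theorem stmt19
    {Ω : Type*} [MeasurableSpace Ω] (P : Measure Ω) [IsProbabilityMeasure P]
    (Δ : Ω → ℝ) (hΔmeas : Measurable Δ) (hΔ0 : ∀ ω, 0 ≤ Δ ω)
    (M₀ : ℝ) (hM₀ : 0 < M₀)
    (p : ℝ≥0∞) (q : ℝ → ℝ) (hqmeas : Measurable q) (hq0 : ∀ x, 0 ≤ q x)
    (hqsupp : ∀ x ≤ 0, q x = 0)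
    (hqbound : ∀ x > 0, q x ≤ M₀)
    (hlaw : P.map Δ = p • Measure.dirac 0 +
      volume.withDensity (fun x => ENNReal.ofReal (q x)))
    (T : ℝ) (hT : 2 ≤ T) :
    ∫⁻ ω, ENNReal.ofReal (min (Real.log T / Δ ω) (T * Δ ω)) ∂P
      ≤ ENNReal.ofReal ((M₀ + 1) * Real.log T + M₀ * Real.log T ^ 2) := by
  have hT0 : (0:ℝ) < T := by linarith
  set L := Real.log T with hLdef
  have hL1 : (0:ℝ) < L := Real.log_pos (by linarith)
  have hLhalf : (1:ℝ)/2 ≤ L := by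
    have h9 := Real.log_two_gt_d9
    have h2 : Real.log 2 ≤ L := Real.log_le_log (by norm_num) hT
    norm_num at h9 ⊢
    linarith
  have hhalf : 1/T ≤ 1/2 := one_div_le_one_div_of_le (by norm_num) hT
  have hinvT : 1/T ≤ L := by linarith
  have hinvT1 : 1/T ≤ 1 := by linarith
  set F : ℝ → ℝ≥0∞ := fun x => ENNReal.ofReal (min (L / x) (T * x)) with hFdef
  have hF : Measurable F := by
    apply ENNReal.measurable_ofReal.comp
    exact (measurable_const.div measurable_id).min (measurable_const.mul measurable_id)
  have hqE : Measurable fun x => ENNReal.ofReal (q x) :=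
    ENNReal.measurable_ofReal.comp hqmeas
  have hmap : ∫⁻ ω, ENNReal.ofReal (min (Real.log T / Δ ω) (T * Δ ω)) ∂P
      = ∫⁻ x, F x ∂(P.map Δ) := (lintegral_map hF hΔmeas).symm
  rw [hmap, hlaw, lintegral_add_measure, lintegral_smul_measure, lintegral_dirac' _ hF,
    lintegral_withDensity_eq_lintegral_mul _ hqE hF]
  have hF0 : F 0 = 0 := by simp [hFdef]
  rw [hF0, smul_zero, zero_add]
  set g : ℝ → ℝ≥0∞ := fun x => ENNReal.ofReal (q x) * F x with hgdef
  have hgfun : ((fun x => ENNReal.ofReal (q x)) * F) = g := rfl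
  rw [hgfun]
  -- total mass of density ≤ 1
  have hmass : (p • Measure.dirac (0:ℝ) +
      volume.withDensity (fun x => ENNReal.ofReal (q x))) Set.univ = 1 := by
    have hprob : IsProbabilityMeasure (P.map Δ) :=
      Measure.isProbabilityMeasure_map hΔmeas.aemeasurable
    rw [← hlaw]; exact measure_univ
  have hq1 : ∫⁻ x, ENNReal.ofReal (q x) ≤ 1 := by
    calc ∫⁻ x, ENNReal.ofReal (q x)
        = (volume.withDensity (fun x => ENNReal.ofReal (q x))) Set.univ := by
          rw [withDensity_apply _ MeasurableSet.univ, Measure.restrict_univ]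
      _ ≤ (p • Measure.dirac (0:ℝ) +
            volume.withDensity (fun x => ENNReal.ofReal (q x))) Set.univ := by
          rw [Measure.add_apply]; exact le_add_self
      _ = 1 := hmass
  -- split the integral
  have hsplit : ∫⁻ x, g x
      = (∫⁻ x in Set.Iic (0:ℝ), g x) + ((∫⁻ x in Set.Ioc (0:ℝ) (1/T), g x)
        + ((∫⁻ x in Set.Ioc (1/T) 1, g x) + ∫⁻ x in Set.Ioi (1:ℝ), g x)) := by
    rw [← lintegral_add_compl g (measurableSet_Iic (a := (0:ℝ)))]
    congr 1
    rw [Set.compl_Iic]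
    rw [← Set.Ioc_union_Ioi_eq_Ioi (le_of_lt (by positivity) : (0:ℝ) ≤ 1/T),
      lintegral_union measurableSet_Ioi (Set.Ioc_disjoint_Ioi le_rfl)]
    congr 1
    rw [← Set.Ioc_union_Ioi_eq_Ioi hinvT1,
      lintegral_union measurableSet_Ioi (Set.Ioc_disjoint_Ioi le_rfl)]
  rw [hsplit]
  -- piece 0
  have h0 : ∫⁻ x in Set.Iic (0:ℝ), g x = 0 := by
    have hz : ∀ x ∈ Set.Iic (0:ℝ), g x = 0 := fun x hx => by
      simp [hgdef, hqsupp x hx]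
    rw [setLIntegral_congr_fun measurableSet_Iic hz,
      lintegral_zero]
  -- piece 1
  have h1 : ∫⁻ x in Set.Ioc (0:ℝ) (1/T), g x ≤ ENNReal.ofReal (M₀ * L) := by
    have hb : ∀ x ∈ Set.Ioc (0:ℝ) (1/T), g x ≤ ENNReal.ofReal M₀ := by
      intro x hx
      have hx0 : 0 < x := hx.1
      have hmn : 0 ≤ min (L/x) (T*x) :=
        le_min (div_nonneg hL1.le hx0.le) (mul_nonneg hT0.le hx0.le)
      have hmin1 : min (L/x) (T*x) ≤ 1 := by
        refine le_trans (min_le_right _ _) ?_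
        have : T * x ≤ T * (1/T) := mul_le_mul_of_nonneg_left hx.2 hT0.le
        rw [mul_one_div, div_self hT0.ne'] at this
        exact this
      calc g x = ENNReal.ofReal (q x * min (L/x) (T*x)) := by
            simp only [hgdef, hFdef]
            rw [← ENNReal.ofReal_mul (hq0 x)]
        _ ≤ ENNReal.ofReal M₀ := ENNReal.ofReal_le_ofReal (by
            nlinarith [hqbound x hx0, hq0 x])
    calc ∫⁻ x in Set.Ioc (0:ℝ) (1/T), g x
        ≤ ∫⁻ _x in Set.Ioc (0:ℝ) (1/T), ENNReal.ofReal M₀ :=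
          setLIntegral_mono_ae measurable_const.aemeasurable (Filter.Eventually.of_forall hb)
      _ = ENNReal.ofReal M₀ * volume (Set.Ioc (0:ℝ) (1/T)) := setLIntegral_const _ _
      _ = ENNReal.ofReal M₀ * ENNReal.ofReal (1/T - 0) := by rw [Real.volume_Ioc]
      _ = ENNReal.ofReal (M₀ * (1/T)) := by
          rw [sub_zero, ENNReal.ofReal_mul hM₀.le]
      _ ≤ ENNReal.ofReal (M₀ * L) :=
          ENNReal.ofReal_le_ofReal (mul_le_mul_of_nonneg_left hinvT hM₀.le)
  -- inverse integral
  have hint : ∫⁻ x in Set.Ioc (1/T) 1, ENNReal.ofReal x⁻¹ = ENNReal.ofReal L := by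
    have hTpos : (0:ℝ) < 1/T := by positivity
    have hii : IntervalIntegrable (fun x:ℝ => x⁻¹) volume (1/T) 1 :=
      intervalIntegral.intervalIntegrable_inv (f := fun x => x) (fun x hx => by
        have h1 : 0 < x := lt_of_lt_of_le (lt_min hTpos one_pos) hx.1
        exact h1.ne') continuousOn_id
    have hInt : IntegrableOn (fun x:ℝ => x⁻¹) (Set.Ioc (1/T) 1) volume := hii.1
    have hpos : 0 ≤ᵐ[volume.restrict (Set.Ioc (1/T) 1)] fun x:ℝ => x⁻¹ := by
      refine (ae_restrict_iff' measurableSet_Ioc).2 (Filter.Eventually.of_forall ?_)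
      intro x hx
      exact inv_nonneg.2 (le_of_lt (lt_of_lt_of_le hTpos hx.1.le))
    rw [← ofReal_integral_eq_lintegral_ofReal hInt hpos]
    congr 1
    rw [← intervalIntegral.integral_of_le hinvT1,
      integral_inv (Set.notMem_uIcc_of_lt hTpos one_pos), one_div_one_div]
  -- piece 2
  have h2 : ∫⁻ x in Set.Ioc (1/T) 1, g x ≤ ENNReal.ofReal (M₀ * L * L) := by
    have hb : ∀ x ∈ Set.Ioc (1/T) 1, g x
        ≤ ENNReal.ofReal (M₀ * L) * ENNReal.ofReal x⁻¹ := by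
      intro x hx
      have hx0 : 0 < x := lt_of_lt_of_le (by positivity) hx.1.le
      rw [← ENNReal.ofReal_mul (by positivity)]
      have hmn : 0 ≤ min (L/x) (T*x) :=
        le_min (div_nonneg hL1.le hx0.le) (mul_nonneg hT0.le hx0.le)
      have hminle : min (L/x) (T*x) ≤ L * x⁻¹ := by
        refine le_trans (min_le_left _ _) ?_
        rw [div_eq_mul_inv]
      calc g x = ENNReal.ofReal (q x * min (L/x) (T*x)) := by
            simp only [hgdef, hFdef]
            rw [← ENNReal.ofReal_mul (hq0 x)]
        _ ≤ ENNReal.ofReal (M₀ * L * x⁻¹) := ENNReal.ofReal_le_ofReal (by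
            have := mul_le_mul (hqbound x hx0) hminle hmn hM₀.le
            calc q x * min (L/x) (T*x) ≤ M₀ * (L * x⁻¹) := this
              _ = M₀ * L * x⁻¹ := by ring)
        _ = ENNReal.ofReal (M₀ * L * x⁻¹) := rfl
    calc ∫⁻ x in Set.Ioc (1/T) 1, g x
        ≤ ∫⁻ x in Set.Ioc (1/T) 1, ENNReal.ofReal (M₀ * L) * ENNReal.ofReal x⁻¹ :=
          setLIntegral_mono_ae (measurable_const.mul
            (ENNReal.measurable_ofReal.comp measurable_inv)).aemeasurable
            (Filter.Eventually.of_forall hb)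
      _ = ENNReal.ofReal (M₀ * L) * ∫⁻ x in Set.Ioc (1/T) 1, ENNReal.ofReal x⁻¹ :=
          lintegral_const_mul _ (ENNReal.measurable_ofReal.comp measurable_inv)
      _ = ENNReal.ofReal (M₀ * L) * ENNReal.ofReal L := by rw [hint]
      _ = ENNReal.ofReal (M₀ * L * L) := by
          rw [← ENNReal.ofReal_mul (by positivity : (0:ℝ) ≤ M₀ * L)]
  -- piece 3
  have h3 : ∫⁻ x in Set.Ioi (1:ℝ), g x ≤ ENNReal.ofReal L := by
    have hb : ∀ x ∈ Set.Ioi (1:ℝ), g x ≤ ENNReal.ofReal L * ENNReal.ofReal (q x) := by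
      intro x hx
      have hx1 : (1:ℝ) < x := hx
      have hx0 : 0 < x := lt_trans one_pos hx1
      have hminle : min (L/x) (T*x) ≤ L :=
        le_trans (min_le_left _ _) (div_le_self hL1.le hx1.le)
      calc g x = ENNReal.ofReal (q x * min (L/x) (T*x)) := by
            simp only [hgdef, hFdef]
            rw [← ENNReal.ofReal_mul (hq0 x)]
        _ ≤ ENNReal.ofReal (L * q x) := ENNReal.ofReal_le_ofReal (by
            have hmn : 0 ≤ min (L/x) (T*x) :=
              le_min (div_nonneg hL1.le hx0.le) (mul_nonneg hT0.le hx0.le)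
            nlinarith [hq0 x])
        _ = ENNReal.ofReal L * ENNReal.ofReal (q x) := ENNReal.ofReal_mul hL1.le
    calc ∫⁻ x in Set.Ioi (1:ℝ), g x
        ≤ ∫⁻ x in Set.Ioi (1:ℝ), ENNReal.ofReal L * ENNReal.ofReal (q x) :=
          setLIntegral_mono_ae (measurable_const.mul hqE).aemeasurable
            (Filter.Eventually.of_forall hb)
      _ = ENNReal.ofReal L * ∫⁻ x in Set.Ioi (1:ℝ), ENNReal.ofReal (q x) :=
          lintegral_const_mul _ hqE
      _ ≤ ENNReal.ofReal L * ∫⁻ x, ENNReal.ofReal (q x) := by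
          exact mul_le_mul_right (setLIntegral_le_lintegral _ _) _
      _ ≤ ENNReal.ofReal L * 1 := mul_le_mul_right hq1 _
      _ = ENNReal.ofReal L := mul_one _
  calc (∫⁻ x in Set.Iic (0:ℝ), g x) + ((∫⁻ x in Set.Ioc (0:ℝ) (1/T), g x)
        + ((∫⁻ x in Set.Ioc (1/T) 1, g x) + ∫⁻ x in Set.Ioi (1:ℝ), g x))
      ≤ 0 + (ENNReal.ofReal (M₀ * L) + (ENNReal.ofReal (M₀ * L * L)
        + ENNReal.ofReal L)) := by
        exact add_le_add h0.le (add_le_add h1 (add_le_add h2 h3))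
    _ = ENNReal.ofReal ((M₀ + 1) * L + M₀ * L ^ 2) := by
        rw [zero_add, ← ENNReal.ofReal_add (by positivity) hL1.le,
          ← ENNReal.ofReal_add (by positivity) (by positivity)]
        congr 1
        ring
end
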